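/- arXiv:2004.00332 — 8 statements merged into one kernel-verified Lean document; each statement's English description precedes it below -/
import Mathlib

section
/- For complex tuples (s₁,…,s_d) with Re(s_j) + Re(s_{j+1}) + ⋯ + Re(s_d) > 0 for every 1 ≤ j ≤ d, the multiple Lucas zeta series ∑_{0 < n₁ < n₂ < ⋯ < n_d} 1/(U_{n₁}^{s₁} ⋯ U_{n_d}^{s_d}) converges absolutely. -/
section helpers

lemma my_abel (σ a : ℕ → ℝ) (ha : a 0 = 0) (d : ℕ) :
    ∑ j ∈ Finset.range d, σ j * a (j+1)
      = ∑ j ∈ Finset.range d, (∑ i ∈ Finset.Ico j d, σ i) * (a (j+1) - a j) := by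
  induction d with
  | zero => simp
  | succ d ih =>
    have h1 : ∀ j ∈ Finset.range (d+1),
        (∑ i ∈ Finset.Ico j (d+1), σ i) * (a (j+1) - a j)
          = (∑ i ∈ Finset.Ico j d, σ i) * (a (j+1) - a j) + σ d * (a (j+1) - a j) := by
      intro j hj
      rw [Finset.sum_Ico_succ_top (Nat.lt_succ_iff.mp (Finset.mem_range.mp hj))]
      ring
    rw [Finset.sum_congr rfl h1, Finset.sum_add_distrib, ← Finset.mul_sum,
      Finset.sum_range_sub, Finset.sum_range_succ, Finset.sum_range_succ, ih, ha]
    simp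

lemma my_Ici {d : ℕ} (g : Fin d → ℝ) (j : Fin d) :
    ∑ i ∈ Finset.Ici j, g i
      = ∑ k ∈ Finset.Ico (j : ℕ) d, if h : k < d then g ⟨k, h⟩ else 0 := by
  refine Finset.sum_bij' (fun a _ => (a : ℕ))
    (fun k hk => (⟨k, (Finset.mem_Ico.mp hk).2⟩ : Fin d)) ?_ ?_ ?_ ?_ ?_
  · intro a ha
    have h1 : j ≤ a := Finset.mem_Ici.mp ha
    exact Finset.mem_Ico.mpr ⟨Fin.le_def.mp h1, a.isLt⟩
  · intro k hk
    have h1 : (j : ℕ) ≤ k := (Finset.mem_Ico.mp hk).1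
    exact Finset.mem_Ici.mpr (Fin.le_def.mpr (by simpa using h1))
  · intro a _; simp
  · intro k _; simp
  · intro a _; simp [a.isLt]

lemma my_abel_fin {d : ℕ} (σ : Fin d → ℝ) (ν : Fin d → ℝ) :
    ∑ j : Fin d, σ j * ν j
      = ∑ j : Fin d, (∑ i ∈ Finset.Ici j, σ i) *
          (ν j - if h : 0 < (j : ℕ) then
            ν ⟨(j : ℕ) - 1, lt_of_le_of_lt (Nat.pred_le _) j.isLt⟩ else 0) := by
  classical
  set σ' : ℕ → ℝ := fun k => if h : k < d then σ ⟨k, h⟩ else 0 with hσ'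
  set a : ℕ → ℝ := fun k => if h : 0 < k ∧ k ≤ d then ν ⟨k - 1, by omega⟩ else 0 with ha
  have ha0 : a 0 = 0 := by simp [ha]
  have hL : ∑ j : Fin d, σ j * ν j = ∑ j ∈ Finset.range d, σ' j * a (j+1) := by
    rw [← Fin.sum_univ_eq_sum_range (fun k => σ' k * a (k+1)) d]
    refine Finset.sum_congr rfl fun j _ => ?_
    have hj := j.isLt
    have e1 : σ' (j : ℕ) = σ j := by simp [hσ', hj]
    have e2 : a ((j : ℕ) + 1) = ν j := by
      have hcond : 0 < (j : ℕ) + 1 ∧ (j : ℕ) + 1 ≤ d := ⟨Nat.succ_pos _, hj⟩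
      simp only [ha, dif_pos hcond, Nat.add_sub_cancel, Fin.eta]
    rw [e1, e2]
  have hR : ∑ j ∈ Finset.range d, (∑ i ∈ Finset.Ico j d, σ' i) * (a (j+1) - a j)
      = ∑ j : Fin d, (∑ i ∈ Finset.Ici j, σ i) *
          (ν j - if h : 0 < (j : ℕ) then
            ν ⟨(j : ℕ) - 1, lt_of_le_of_lt (Nat.pred_le _) j.isLt⟩ else 0) := by
    rw [← Fin.sum_univ_eq_sum_range (fun k => (∑ i ∈ Finset.Ico k d, σ' i) * (a (k+1) - a k)) d]
    refine Finset.sum_congr rfl fun j _ => ?_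
    have hj := j.isLt
    have e1 : ∑ i ∈ Finset.Ico (j : ℕ) d, σ' i = ∑ i ∈ Finset.Ici j, σ i := (my_Ici σ j).symm
    have e2 : a ((j : ℕ) + 1) = ν j := by
      have hcond : 0 < (j : ℕ) + 1 ∧ (j : ℕ) + 1 ≤ d := ⟨Nat.succ_pos _, hj⟩
      simp only [ha, dif_pos hcond, Nat.add_sub_cancel, Fin.eta]
    have e3 : a (j : ℕ) = if h : 0 < (j : ℕ) then
        ν ⟨(j : ℕ) - 1, lt_of_le_of_lt (Nat.pred_le _) j.isLt⟩ else 0 := by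
      by_cases h : 0 < (j : ℕ)
      · have hcond : 0 < (j : ℕ) ∧ (j : ℕ) ≤ d := ⟨h, hj.le⟩
        simp only [ha, dif_pos hcond, dif_pos h]
      · rw [dif_neg h, ha]
        simp only []
        rw [dif_neg (by omega : ¬(0 < (j : ℕ) ∧ (j : ℕ) ≤ d))]
    rw [e1, e2, e3]
  rw [hL, my_abel σ' a ha0 d, hR]


lemma my_pi_prod : ∀ (d : ℕ) (ρ : Fin d → ℝ), (∀ j, 0 ≤ ρ j) → (∀ j, ρ j < 1) →
    Summable (fun m : Fin d → ℕ => ∏ j, ρ j ^ m j) := by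
  intro d
  induction d with
  | zero =>
    intro ρ _ _
    haveI : Finite (Fin 0 → ℕ) := Finite.of_subsingleton
    exact Summable.of_finite
  | succ d ih =>
    intro ρ h0 h1
    have hg : Summable (fun n : ℕ => ρ 0 ^ n) := summable_geometric_of_lt_one (h0 0) (h1 0)
    have h3 : (0 : ℕ → ℝ) ≤ fun n : ℕ => ρ 0 ^ n := Pi.le_def.mpr fun n => by
      simpa using pow_nonneg (h0 0) n
    have h4 : (0 : (Fin d → ℕ) → ℝ) ≤ fun m : Fin d → ℕ => ∏ j : Fin d, ρ j.succ ^ m j :=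
      Pi.le_def.mpr fun m => by
        simpa using Finset.prod_nonneg fun j (_ : j ∈ Finset.univ) => pow_nonneg (h0 j.succ) (m j)
    have key : Summable (fun p : ℕ × (Fin d → ℕ) => ρ 0 ^ p.1 * ∏ j : Fin d, ρ j.succ ^ p.2 j) := by
      apply Summable.mul_of_nonneg hg (ih _ (fun j => h0 j.succ) (fun j => h1 j.succ)) h3 h4
    refine (Equiv.summable_iff (Fin.consEquiv (fun _ : Fin (d+1) => ℕ))).mp ?_
    refine key.congr fun p => ?_
    show ρ 0 ^ p.1 * ∏ j : Fin d, ρ j.succ ^ p.2 j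
        = ∏ j : Fin (d+1), ρ j ^ (Fin.cons p.1 p.2 : ∀ _ : Fin (d+1), ℕ) j
    rw [Fin.prod_univ_succ]
    simp

end helpers

/-- The multiple Lucas zeta series
`∑_{0<n₁<⋯<n_d} 1/(U_{n₁}^{s₁}⋯U_{n_d}^{s_d})` converges absolutely on the domain
`𝔇_d = {s : ∑_{i=j}^d Re(s_i) > 0 for all j}`. Complex powers of the positive reals
`U n` are taken via the real logarithm: `U^{-s} = exp(-s·log U)`. -/
theorem stmt3 (P Q : ℝ) (hP : 0 < P) (hQ : Q ≠ 0)
    (hPQ1 : P ≤ 2 → Q < P - 1) (hPQ2 : 2 < P → Q ≤ P - 1)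
    (α β : ℝ) (hα : α = (P + Real.sqrt (P ^ 2 - 4 * Q)) / 2)
    (hβ : β = (P - Real.sqrt (P ^ 2 - 4 * Q)) / 2)
    (U : ℕ → ℝ) (hU : ∀ n, U n = (α ^ n - β ^ n) / (α - β))
    (d : ℕ) (s : Fin d → ℂ)
    (hs : ∀ j : Fin d, 0 < ∑ i ∈ Finset.Ici j, (s i).re) :
    Summable (fun n : {n : Fin d → ℕ // StrictMono n ∧ ∀ j, 0 < n j} =>
      ‖∏ j : Fin d, Complex.exp (-(s j) * Real.log (U (n.1 j)))‖) := by
  classical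
  have hD : 0 < P ^ 2 - 4 * Q := by
    rcases le_or_gt P 2 with h | h
    · have := hPQ1 h; nlinarith
    · have := hPQ2 h; nlinarith
  have hsD : 0 < Real.sqrt (P ^ 2 - 4 * Q) := Real.sqrt_pos.mpr hD
  have hαβ : α - β = Real.sqrt (P ^ 2 - 4 * Q) := by rw [hα, hβ]; ring
  have hα1 : 1 < α := by
    rcases lt_or_ge P 2 with h | h
    · have hq := hPQ1 h.le
      have h3 : Real.sqrt ((2 - P) ^ 2) < Real.sqrt (P ^ 2 - 4 * Q) :=
        Real.sqrt_lt_sqrt (by positivity) (by nlinarith)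
      rw [Real.sqrt_sq (by linarith : (0:ℝ) ≤ 2 - P)] at h3
      rw [hα]; linarith
    · rw [hα]; linarith
  have hαpos : 0 < α := by linarith
  have habs : |β| < α := by
    rw [abs_lt]
    constructor
    · rw [hα, hβ]; linarith
    · rw [hα, hβ]; linarith
  have habs0 : (0:ℝ) ≤ |β| := abs_nonneg β
  -- bounds on U
  set c : ℝ := (α - |β|) / (α * Real.sqrt (P ^ 2 - 4 * Q)) with hc_def
  set Cu : ℝ := 2 / Real.sqrt (P ^ 2 - 4 * Q) with hCu_def
  have hc : 0 < c := div_pos (by linarith) (by positivity)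
  have hCu : 0 < Cu := by positivity
  have hUb : ∀ k : ℕ, c * α ^ (k+1) ≤ U (k+1) ∧ U (k+1) ≤ Cu * α ^ (k+1) := by
    intro k
    have hβk : |β ^ (k+1)| ≤ |β| * α ^ k := by
      rw [abs_pow, pow_succ']
      exact mul_le_mul_of_nonneg_left (pow_le_pow_left₀ habs0 habs.le k) habs0
    obtain ⟨hβk1, hβk2⟩ := abs_le.mp hβk
    have hαk : (0:ℝ) < α ^ k := pow_pos hαpos k
    have hsucc : α ^ (k+1) = α ^ k * α := pow_succ α k
    rw [hU (k+1), hαβ]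
    constructor
    · rw [le_div_iff₀ hsD]
      have hc' : c * α ^ (k+1) * Real.sqrt (P ^ 2 - 4 * Q) = (α - |β|) * α ^ k := by
        rw [hc_def, hsucc]
        field_simp
      rw [hc']
      nlinarith
    · rw [div_le_iff₀ hsD]
      have hC' : Cu * α ^ (k+1) * Real.sqrt (P ^ 2 - 4 * Q) = 2 * α ^ (k+1) := by
        rw [hCu_def]
        field_simp
      rw [hC']
      nlinarith
  have hUpos : ∀ k : ℕ, 0 < U (k+1) :=
    fun k => lt_of_lt_of_le (by positivity) (hUb k).1
  have hlogα : 0 < Real.log α := Real.log_pos hα1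
  set B : ℝ := |Real.log c| + |Real.log Cu| with hB_def
  have hlogU : ∀ k : ℕ, |Real.log (U (k+1)) - ((k:ℝ)+1) * Real.log α| ≤ B := by
    intro k
    have h1 : Real.log (c * α ^ (k+1)) ≤ Real.log (U (k+1)) :=
      Real.log_le_log (by positivity) (hUb k).1
    have h2 : Real.log (U (k+1)) ≤ Real.log (Cu * α ^ (k+1)) :=
      Real.log_le_log (hUpos k) (hUb k).2
    rw [Real.log_mul hc.ne' (by positivity), Real.log_pow] at h1
    rw [Real.log_mul hCu.ne' (by positivity), Real.log_pow] at h2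
    push_cast at h1 h2
    rw [abs_le]
    constructor
    · have := neg_abs_le (Real.log c)
      have := abs_nonneg (Real.log Cu)
      rw [hB_def]; linarith
    · have := le_abs_self (Real.log Cu)
      have := abs_nonneg (Real.log c)
      rw [hB_def]; linarith
  -- setup for summability
  set T : Fin d → ℝ := fun j => ∑ i ∈ Finset.Ici j, (s i).re with hT_def
  have hT : ∀ j, 0 < T j := fun j => hs j
  set ρ : Fin d → ℝ := fun j => Real.exp (-(T j) * Real.log α) with hρ_def
  have hρ0 : ∀ j, 0 ≤ ρ j := fun j => (Real.exp_pos _).le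
  have hρ1 : ∀ j, ρ j < 1 := by
    intro j
    rw [hρ_def]
    simp only []
    have : -T j * Real.log α < 0 := by
      have := mul_pos (hT j) hlogα
      nlinarith
    calc Real.exp (-T j * Real.log α) < Real.exp 0 := Real.exp_lt_exp.mpr this
      _ = 1 := Real.exp_zero
  have hF : Summable (fun m : Fin d → ℕ => ∏ j, ρ j ^ m j) := my_pi_prod d ρ hρ0 hρ1
  -- the difference map
  set prev : (Fin d → ℕ) → Fin d → ℕ := fun f j =>
    if h : 0 < (j : ℕ) then f ⟨(j : ℕ) - 1, lt_of_le_of_lt (Nat.pred_le _) j.isLt⟩ else 0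
    with hprev_def
  set Φ : {n : Fin d → ℕ // StrictMono n ∧ ∀ j, 0 < n j} → (Fin d → ℕ) :=
    fun n j => n.1 j - prev n.1 j with hΦ_def
  have hprevlt : ∀ n : {n : Fin d → ℕ // StrictMono n ∧ ∀ j, 0 < n j}, ∀ j : Fin d,
      prev n.1 j < n.1 j := by
    intro n j
    by_cases h : 0 < (j : ℕ)
    · rw [hprev_def]
      simp only [dif_pos h]
      exact n.2.1 (by rw [Fin.lt_def]; simp; omega)
    · rw [hprev_def]
      simp only [dif_neg h]
      exact n.2.2 j
  have hΦinj : Function.Injective Φ := by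
    intro n n' hnn
    have key : ∀ k : ℕ, ∀ hk : k < d, n.1 ⟨k, hk⟩ = n'.1 ⟨k, hk⟩ := by
      intro k
      induction k with
      | zero =>
        intro hk
        have h0 := congrFun hnn ⟨0, hk⟩
        rw [hΦ_def] at h0
        simp only [hprev_def] at h0
        norm_num at h0
        exact h0
      | succ k ih =>
        intro hk
        have hk' : k < d := Nat.lt_of_succ_lt hk
        have h1 := congrFun hnn ⟨k+1, hk⟩
        rw [hΦ_def] at h1
        have e1 : prev n.1 ⟨k+1, hk⟩ = n.1 ⟨k, hk'⟩ := by
          rw [hprev_def]; simp only [dif_pos (Nat.succ_pos k)]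
          try rfl
        have e2 : prev n'.1 ⟨k+1, hk⟩ = n'.1 ⟨k, hk'⟩ := by
          rw [hprev_def]; simp only [dif_pos (Nat.succ_pos k)]
          try rfl
        have hlt1 := hprevlt n ⟨k+1, hk⟩
        have hlt2 := hprevlt n' ⟨k+1, hk⟩
        rw [e1] at hlt1
        rw [e2] at hlt2
        simp only [] at h1
        rw [e1, e2] at h1
        have := ih hk'
        omega
    refine Subtype.ext (funext fun j => ?_)
    have := key j.1 j.2
    simpa using this
  have hΦcast : ∀ n : {n : Fin d → ℕ // StrictMono n ∧ ∀ j, 0 < n j}, ∀ j : Fin d,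
      ((Φ n j : ℕ) : ℝ) = ((n.1 j : ℕ) : ℝ) - ((prev n.1 j : ℕ) : ℝ) := by
    intro n j
    rw [hΦ_def]
    exact_mod_cast Nat.cast_sub (hprevlt n j).le
  set K : ℝ := Real.exp (∑ j : Fin d, |(s j).re| * B) with hK_def
  have hbound : ∀ n : {n : Fin d → ℕ // StrictMono n ∧ ∀ j, 0 < n j},
      ‖∏ j : Fin d, Complex.exp (-(s j) * Real.log (U (n.1 j)))‖
        ≤ K * ∏ j, ρ j ^ (Φ n j) := by
    intro n
    have hnorm : ‖∏ j : Fin d, Complex.exp (-(s j) * Real.log (U (n.1 j)))‖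
        = ∏ j : Fin d, Real.exp (-(s j).re * Real.log (U (n.1 j))) := by
      rw [norm_prod]
      refine Finset.prod_congr rfl fun j _ => ?_
      rw [Complex.norm_exp]
      congr 1
      simp [Complex.mul_re]
    have hfac : ∀ j : Fin d, -(s j).re * Real.log (U (n.1 j))
        ≤ -(s j).re * (((n.1 j : ℕ) : ℝ) * Real.log α) + |(s j).re| * B := by
      intro j
      obtain ⟨k, hk⟩ : ∃ k, n.1 j = k + 1 := ⟨n.1 j - 1, by have := n.2.2 j; omega⟩
      have h1 := hlogU k
      have hcast : ((n.1 j : ℕ) : ℝ) = (k : ℝ) + 1 := by rw [hk]; push_cast; ring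
      rw [← hk, ← hcast] at h1
      have h2 : -(s j).re * (Real.log (U (n.1 j)) - ((n.1 j : ℕ) : ℝ) * Real.log α)
          ≤ |(s j).re| * B := by
        calc -(s j).re * (Real.log (U (n.1 j)) - ((n.1 j : ℕ) : ℝ) * Real.log α)
            ≤ |(-(s j).re) * (Real.log (U (n.1 j)) - ((n.1 j : ℕ) : ℝ) * Real.log α)| :=
              le_abs_self _
          _ = |(s j).re| * |Real.log (U (n.1 j)) - ((n.1 j : ℕ) : ℝ) * Real.log α| := by
              rw [abs_mul, abs_neg]
          _ ≤ |(s j).re| * B := mul_le_mul_of_nonneg_left h1 (abs_nonneg _)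
      have h3 : -(s j).re * Real.log (U (n.1 j))
          = -(s j).re * (((n.1 j : ℕ) : ℝ) * Real.log α)
            + (-(s j).re) * (Real.log (U (n.1 j)) - ((n.1 j : ℕ) : ℝ) * Real.log α) := by ring
      linarith [h2]
    have habel : ∑ j : Fin d, (s j).re * ((n.1 j : ℕ) : ℝ)
        = ∑ j : Fin d, T j * ((Φ n j : ℕ) : ℝ) := by
      rw [my_abel_fin (fun j => (s j).re) (fun j => ((n.1 j : ℕ) : ℝ))]
      refine Finset.sum_congr rfl fun j _ => ?_
      congr 1
      rw [hΦcast n j]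
      congr 1
      rw [hprev_def]
      by_cases h0 : 0 < (j : ℕ)
      · rw [dif_pos h0]
        simp only [dif_pos h0]
      · rw [dif_neg h0]
        simp only [dif_neg h0]
        norm_num
    have hsum2 : ∑ j : Fin d, -(s j).re * (((n.1 j : ℕ) : ℝ) * Real.log α)
        = ∑ j : Fin d, ((Φ n j : ℕ) : ℝ) * (-(T j) * Real.log α) := by
      have e1 : ∑ j : Fin d, -(s j).re * (((n.1 j : ℕ) : ℝ) * Real.log α)
          = (∑ j : Fin d, (s j).re * ((n.1 j : ℕ) : ℝ)) * (-(Real.log α)) := by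
        rw [Finset.sum_mul]
        exact Finset.sum_congr rfl fun j _ => by ring
      have e2 : ∑ j : Fin d, ((Φ n j : ℕ) : ℝ) * (-(T j) * Real.log α)
          = (∑ j : Fin d, T j * ((Φ n j : ℕ) : ℝ)) * (-(Real.log α)) := by
        rw [Finset.sum_mul]
        exact Finset.sum_congr rfl fun j _ => by ring
      rw [e1, e2, habel]
    rw [hnorm]
    calc ∏ j : Fin d, Real.exp (-(s j).re * Real.log (U (n.1 j)))
        ≤ ∏ j : Fin d, Real.exp (-(s j).re * (((n.1 j : ℕ) : ℝ) * Real.log α)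
            + |(s j).re| * B) :=
          Finset.prod_le_prod (fun j _ => (Real.exp_pos _).le)
            (fun j _ => Real.exp_le_exp.mpr (hfac j))
      _ = Real.exp (∑ j : Fin d, (-(s j).re * (((n.1 j : ℕ) : ℝ) * Real.log α)
            + |(s j).re| * B)) := (Real.exp_sum _ _).symm
      _ = K * Real.exp (∑ j : Fin d, -(s j).re * (((n.1 j : ℕ) : ℝ) * Real.log α)) := by
          rw [Finset.sum_add_distrib, Real.exp_add, hK_def]
          ring
      _ = K * ∏ j, ρ j ^ (Φ n j) := by
          congr 1
          rw [hsum2, Real.exp_sum]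
          refine Finset.prod_congr rfl fun j _ => ?_
          exact Real.exp_nat_mul _ _
  refine Summable.of_nonneg_of_le (fun n => norm_nonneg _) hbound ?_
  apply Summable.mul_left K (hF.comp_injective hΦinj)
end

section
/- For any integers q ≥ 2 and positive integers r₁,…,r_d, and (s₁,…,s_d) ∈ 𝔇_d, the multiple shifted Lucas zeta series ∑_{n₁,…,n_d ≥ 0} 1/(U_{qn₁+r₁}^{s₁} · U_{q(n₁+n₂)+r₁+r₂}^{s₂} ⋯ U_{q(n₁+⋯+n_d)+r₁+⋯+r_d}^{s_d}) converges absolutely. -/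
open Finset

/-- Auxiliary: product of geometric terms over a Pi type is summable. -/
lemma aux_summable_pi_prod : ∀ (d : ℕ) (ρ : Fin d → ℝ), (∀ i, 0 ≤ ρ i) → (∀ i, ρ i < 1) →
    Summable (fun n : Fin d → ℕ => ∏ i, ρ i ^ n i) := by
  intro d
  induction d with
  | zero =>
    intro ρ _ _
    exact Summable.of_finite
  | succ d ih =>
    intro ρ h0 h1
    have hrec := ih (fun i => ρ i.succ) (fun i => h0 _) (fun i => h1 _)
    have hgeo : Summable (fun n : ℕ => ρ 0 ^ n) :=
      summable_geometric_of_lt_one (h0 0) (h1 0)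
    have hmul := hgeo.mul_of_nonneg hrec (fun n => pow_nonneg (h0 0) n)
      (fun n => Finset.prod_nonneg (fun i _ => pow_nonneg (h0 _) _))
    apply ((Fin.consEquiv (fun _ : Fin (d + 1) => ℕ)).summable_iff).mp
    convert hmul using 1
    funext p
    simp only [Function.comp_apply, Fin.consEquiv_apply]
    rw [Fin.prod_univ_succ]
    simp [Fin.cons_zero, Fin.cons_succ]

set_option maxHeartbeats 1000000 in
/-- The multiple shifted Lucas zeta series
`∑_{n₁,…,n_d ≥ 0} ∏_j 1/U_{q(n₁+⋯+n_j)+(r₁+⋯+r_j)}^{s_j}` converges absolutely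
on `𝔇_d`. -/
theorem stmt4 (P Q : ℝ) (hP : 0 < P) (hQ : Q ≠ 0)
    (hPQ1 : P ≤ 2 → Q < P - 1) (hPQ2 : 2 < P → Q ≤ P - 1)
    (α β : ℝ) (hα : α = (P + Real.sqrt (P ^ 2 - 4 * Q)) / 2)
    (hβ : β = (P - Real.sqrt (P ^ 2 - 4 * Q)) / 2)
    (U : ℕ → ℝ) (hU : ∀ n, U n = (α ^ n - β ^ n) / (α - β))
    (d q : ℕ) (hq : 2 ≤ q) (r : Fin d → ℕ) (hr : ∀ j, 1 ≤ r j)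
    (s : Fin d → ℂ)
    (hs : ∀ j : Fin d, 0 < ∑ i ∈ Finset.Ici j, (s i).re) :
    Summable (fun n : Fin d → ℕ =>
      ‖∏ j : Fin d, Complex.exp (-(s j) *
        Real.log (U (q * (∑ i ∈ Finset.Iic j, n i) + ∑ i ∈ Finset.Iic j, r i)))‖) := by
  classical
  -- discriminant positive
  have hD : 0 < P ^ 2 - 4 * Q := by
    rcases le_or_gt P 2 with h | h
    · nlinarith [hPQ1 h]
    · nlinarith [hPQ2 h]
  set S := Real.sqrt (P ^ 2 - 4 * Q) with hSdef
  have hS : 0 < S := Real.sqrt_pos.mpr hD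
  have hSsq : S ^ 2 = P ^ 2 - 4 * Q := Real.sq_sqrt hD.le
  have hαβ : α - β = S := by rw [hα, hβ]; ring
  have hα1 : 1 < α := by
    rcases le_or_gt P 2 with h | h
    · have hq' : Q < P - 1 := hPQ1 h
      rw [hα]; nlinarith
    · rw [hα]; nlinarith
  have hα0 : 0 < α := lt_trans one_pos hα1
  have hβlt : |β| < α := by
    rw [abs_lt]
    constructor
    · rw [hα, hβ]; nlinarith
    · rw [hα, hβ]; nlinarith
  set c := (α - |β|) / (α * S) with hcdef
  set C := (2 : ℝ) / S with hCdef
  have hc : 0 < c := div_pos (by linarith) (mul_pos hα0 hS)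
  have hC : 0 < C := div_pos two_pos hS
  -- growth bounds for U
  have hUb : ∀ m : ℕ, 1 ≤ m → c * α ^ m ≤ U m ∧ U m ≤ C * α ^ m := by
    intro m hm
    obtain ⟨k, rfl⟩ : ∃ k, m = k + 1 := ⟨m - 1, (Nat.succ_pred_eq_of_pos hm).symm⟩
    have hpk : (0 : ℝ) < α ^ k := pow_pos hα0 k
    have hbk : |β| ^ k ≤ α ^ k := pow_le_pow_left₀ (abs_nonneg β) hβlt.le k
    have habs : |β ^ (k + 1)| ≤ |β| * α ^ k := by
      rw [abs_pow, pow_succ]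
      calc |β| ^ k * |β| ≤ α ^ k * |β| :=
            mul_le_mul_of_nonneg_right hbk (abs_nonneg β)
        _ = |β| * α ^ k := mul_comm _ _
    constructor
    · rw [hU, le_div_iff₀ (by rw [hαβ]; exact hS)]
      have hcc : c * α ^ (k + 1) * (α - β) = (α - |β|) * α ^ k := by
        rw [hαβ, hcdef, pow_succ]
        field_simp
      rw [hcc]
      have h2 : β ^ (k + 1) ≤ |β| * α ^ k := le_trans (le_abs_self _) habs
      nlinarith [pow_succ α k]
    · rw [hU, div_le_iff₀ (by rw [hαβ]; exact hS)]
      have hcc : C * α ^ (k + 1) * (α - β) = 2 * α ^ (k + 1) := by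
        rw [hαβ, hCdef]; field_simp
      rw [hcc]
      have h2 : -β ^ (k + 1) ≤ |β| * α ^ k := le_trans (neg_le_abs _) habs
      have h3 : |β| * α ^ k ≤ α * α ^ k :=
        mul_le_mul_of_nonneg_right hβlt.le hpk.le
      nlinarith [pow_succ α k]
  have hUpos : ∀ m : ℕ, 1 ≤ m → 0 < U m := fun m hm =>
    lt_of_lt_of_le (mul_pos hc (pow_pos hα0 m)) (hUb m hm).1
  set L := Real.log α with hLdef
  have hL : 0 < L := Real.log_pos hα1
  -- log bounds
  have hlog : ∀ m : ℕ, 1 ≤ m →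
      Real.log c + m * L ≤ Real.log (U m) ∧ Real.log (U m) ≤ Real.log C + m * L := by
    intro m hm
    have h1 := (hUb m hm).1
    have h2 := (hUb m hm).2
    have hpm : (0 : ℝ) < α ^ m := pow_pos hα0 m
    constructor
    · calc Real.log c + m * L = Real.log (c * α ^ m) := by
            rw [Real.log_mul hc.ne' hpm.ne', Real.log_pow]
        _ ≤ Real.log (U m) := Real.log_le_log (mul_pos hc hpm) h1
    · calc Real.log (U m) ≤ Real.log (C * α ^ m) :=
            Real.log_le_log (hUpos m hm) h2
        _ = Real.log C + m * L := by
            rw [Real.log_mul hC.ne' hpm.ne', Real.log_pow]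
  set B0 := max |Real.log c| |Real.log C| with hB0def
  set σ : Fin d → ℝ := fun j => (s j).re with hσdef
  set τ : Fin d → ℝ := fun i => ∑ j ∈ Ici i, σ j with hτdef
  have hτpos : ∀ i, 0 < τ i := hs
  set M : (Fin d → ℕ) → Fin d → ℕ :=
    fun n j => q * (∑ i ∈ Iic j, n i) + ∑ i ∈ Iic j, r i with hMdef
  have hM1 : ∀ n j, 1 ≤ M n j := by
    intro n j
    have h1 : 1 ≤ ∑ i ∈ Iic j, r i :=
      le_trans (hr j) (Finset.single_le_sum (fun i _ => Nat.zero_le _) (mem_Iic.mpr le_rfl))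
    exact le_trans h1 (Nat.le_add_left _ _)
  -- rewrite each summand as a real exponential
  have hterm : ∀ n : Fin d → ℕ,
      ‖∏ j : Fin d, Complex.exp (-(s j) *
        Real.log (U (q * (∑ i ∈ Finset.Iic j, n i) + ∑ i ∈ Finset.Iic j, r i)))‖
      = Real.exp (∑ j, (-(σ j)) * Real.log (U (M n j))) := by
    intro n
    rw [← Complex.exp_sum, Complex.norm_exp, Complex.re_sum,
      Real.exp_eq_exp]
    apply Finset.sum_congr rfl
    intro j _
    simp [hσdef, hMdef, Complex.mul_re]
  set ρ : Fin d → ℝ := fun i => Real.exp (-(L * q * τ i)) with hρdef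
  set B : ℝ := ∑ j, |σ j| * B0 with hBdef
  -- key bound
  have hbound : ∀ n : Fin d → ℕ,
      Real.exp (∑ j, (-(σ j)) * Real.log (U (M n j)))
        ≤ Real.exp B * ∏ i, ρ i ^ n i := by
    intro n
    have hexp : ∀ j, (-(σ j)) * Real.log (U (M n j))
        ≤ |σ j| * B0 + (-(σ j)) * ((M n j : ℝ) * L) := by
      intro j
      have hE := hlog (M n j) (hM1 n j)
      have hEb : |Real.log (U (M n j)) - (M n j : ℝ) * L| ≤ B0 := by
        rw [abs_le]
        constructor
        · have : -|Real.log c| ≤ Real.log c := neg_abs_le _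
          have h0 := hE.1
          have hm : -B0 ≤ -|Real.log c| := neg_le_neg (le_max_left _ _)
          linarith
        · have : Real.log C ≤ |Real.log C| := le_abs_self _
          have h0 := hE.2
          have hm : |Real.log C| ≤ B0 := le_max_right _ _
          linarith
      have : (-(σ j)) * (Real.log (U (M n j)) - (M n j : ℝ) * L) ≤ |σ j| * B0 := by
        calc (-(σ j)) * (Real.log (U (M n j)) - (M n j : ℝ) * L)
            ≤ |(-(σ j)) * (Real.log (U (M n j)) - (M n j : ℝ) * L)| := le_abs_self _
          _ = |σ j| * |Real.log (U (M n j)) - (M n j : ℝ) * L| := by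
              rw [abs_mul, abs_neg]
          _ ≤ |σ j| * B0 := mul_le_mul_of_nonneg_left hEb (abs_nonneg _)
      nlinarith [this]
    have hswap : ∑ j, σ j * (M n j : ℝ) = ∑ i, τ i * (q * n i + r i : ℝ) := by
      have h1 : ∀ j, σ j * (M n j : ℝ) = ∑ i ∈ Iic j, σ j * (q * n i + r i : ℝ) := by
        intro j
        have hMc : ((M n j : ℕ) : ℝ) = ∑ i ∈ Iic j, ((q : ℝ) * n i + r i) := by
          simp only [hMdef]
          push_cast
          rw [Finset.mul_sum, ← Finset.sum_add_distrib]
        rw [hMc, Finset.mul_sum]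
      rw [Finset.sum_congr rfl (fun j _ => h1 j)]
      rw [Finset.sum_comm' (t' := Finset.univ) (s' := fun i => Ici i)
        (by intro x y; simp [Finset.mem_Iic, Finset.mem_Ici])]
      apply Finset.sum_congr rfl
      intro i _
      rw [hτdef, Finset.sum_mul]
    have hmain : ∑ j, (-(σ j)) * Real.log (U (M n j))
        ≤ B + ∑ i, (-(L * q * τ i)) * (n i : ℝ) := by
      calc ∑ j, (-(σ j)) * Real.log (U (M n j))
          ≤ ∑ j, (|σ j| * B0 + (-(σ j)) * ((M n j : ℝ) * L)) :=
            Finset.sum_le_sum (fun j _ => hexp j)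
        _ = B + (-L) * ∑ j, σ j * (M n j : ℝ) := by
            rw [Finset.sum_add_distrib, hBdef, Finset.mul_sum]
            congr 1
            apply Finset.sum_congr rfl
            intro j _
            ring
        _ = B + (-L) * ∑ i, τ i * (q * n i + r i : ℝ) := by rw [hswap]
        _ ≤ B + ∑ i, (-(L * q * τ i)) * (n i : ℝ) := by
            rw [Finset.mul_sum]
            apply add_le_add_right
            apply Finset.sum_le_sum
            intro i _
            have hri : (0:ℝ) ≤ (r i : ℝ) := Nat.cast_nonneg _
            have hτi := (hτpos i).le
            have h0 : 0 ≤ L * (τ i * (r i : ℝ)) :=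
              mul_nonneg hL.le (mul_nonneg hτi hri)
            nlinarith [h0]
    calc Real.exp (∑ j, (-(σ j)) * Real.log (U (M n j)))
        ≤ Real.exp (B + ∑ i, (-(L * q * τ i)) * (n i : ℝ)) := Real.exp_le_exp.mpr hmain
      _ = Real.exp B * ∏ i, ρ i ^ n i := by
          rw [Real.exp_add]
          congr 1
          rw [Real.exp_sum]
          apply Finset.prod_congr rfl
          intro i _
          simp only [hρdef]
          rw [mul_comm (-(L * (q : ℝ) * τ i)) ((n i : ℝ)), Real.exp_nat_mul]
  -- conclude by comparison
  have hρ0 : ∀ i, 0 ≤ ρ i := fun i => (Real.exp_pos _).le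
  have hρ1 : ∀ i, ρ i < 1 := by
    intro i
    simp only [hρdef]
    rw [Real.exp_lt_one_iff]
    have : 0 < L * q * τ i := by
      apply mul_pos (mul_pos hL _) (hτpos i)
      exact_mod_cast lt_of_lt_of_le two_pos hq
    linarith
  have hsum : Summable (fun n : Fin d → ℕ => Real.exp B * ∏ i, ρ i ^ n i) :=
    (aux_summable_pi_prod d ρ hρ0 hρ1).mul_left _
  apply Summable.of_nonneg_of_le (fun n => norm_nonneg _) _ hsum
  intro n
  rw [hterm n]
  exact hbound n
end

section
/- Let χ₁,…,χ_d be Dirichlet characters of the same modulus q ≥ 2. Then for (s₁,…,s_d) ∈ 𝔇_d, the multiple Lucas L-series ∑_{0<n₁<⋯<n_d} χ₁(n₁)⋯χ_d(n_d)/(U_{n₁}^{s₁}⋯U_{n_d}^{s_d}) converges absolutely. -/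
open Finset

lemma aux_pi_summable : ∀ {d : ℕ} (r : Fin d → ℝ), (∀ i, 0 ≤ r i) → (∀ i, r i < 1) →
    Summable (fun g : Fin d → ℕ => ∏ i, (r i) ^ (g i)) := by
  intro d
  induction d with
  | zero => intro r _ _; exact Summable.of_finite
  | succ d ih =>
    intro r h0 h1
    have hgeo : Summable (fun k : ℕ => (r 0) ^ k) :=
      summable_geometric_of_lt_one (h0 0) (h1 0)
    have hrest := ih (fun i => r i.succ) (fun i => h0 _) (fun i => h1 _)
    have h3 : (0 : ℕ → ℝ) ≤ (fun k : ℕ => (r 0) ^ k) := fun k => pow_nonneg (h0 0) k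
    have h2 : (0 : (Fin d → ℕ) → ℝ) ≤ (fun g : Fin d → ℕ => ∏ i, (r i.succ) ^ (g i)) :=
      fun g => Finset.prod_nonneg fun i _ => pow_nonneg (h0 _) _
    have hprod := Summable.mul_of_nonneg hgeo hrest h3 h2
    have einj : Function.Injective
        (fun g : Fin (d + 1) → ℕ => ((g 0, fun i => g i.succ) : ℕ × (Fin d → ℕ))) := by
      intro g g' h
      funext i
      refine Fin.cases ?_ ?_ i
      · exact congrArg Prod.fst h
      · intro i; exact congrFun (congrArg Prod.snd h) i
    have hcomp := hprod.comp_injective einj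
    refine hcomp.congr fun g => ?_
    simp only [Function.comp_apply]
    rw [Fin.prod_univ_succ]

/-- For Dirichlet characters `χ₁,…,χ_d` of the same modulus `q ≥ 2`,
the multiple Lucas `L`-series `∑_{0<n₁<⋯<n_d} χ₁(n₁)⋯χ_d(n_d)/(U_{n₁}^{s₁}⋯U_{n_d}^{s_d})`
converges absolutely on `𝔇_d`. -/
theorem stmt5 (P Q : ℝ) (hP : 0 < P) (hQ : Q ≠ 0)
    (hPQ1 : P ≤ 2 → Q < P - 1) (hPQ2 : 2 < P → Q ≤ P - 1)
    (α β : ℝ) (hα : α = (P + Real.sqrt (P ^ 2 - 4 * Q)) / 2)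
    (hβ : β = (P - Real.sqrt (P ^ 2 - 4 * Q)) / 2)
    (U : ℕ → ℝ) (hU : ∀ n, U n = (α ^ n - β ^ n) / (α - β))
    (d q : ℕ) (hq : 2 ≤ q) (χ : Fin d → DirichletCharacter ℂ q)
    (s : Fin d → ℂ)
    (hs : ∀ j : Fin d, 0 < ∑ i ∈ Finset.Ici j, (s i).re) :
    Summable (fun n : {n : Fin d → ℕ // StrictMono n ∧ ∀ j, 0 < n j} =>
      ‖∏ j : Fin d, χ j ((n.1 j : ℕ) : ZMod q) *
        Complex.exp (-(s j) * Real.log (U (n.1 j)))‖) := by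
  -- basic facts about α, β
  have hD : 0 < P ^ 2 - 4 * Q := by
    rcases le_or_gt P 2 with h | h
    · nlinarith [hPQ1 h]
    · nlinarith [hPQ2 h]
  have hsq : Real.sqrt (P ^ 2 - 4 * Q) ^ 2 = P ^ 2 - 4 * Q := Real.sq_sqrt hD.le
  have hsqpos : 0 < Real.sqrt (P ^ 2 - 4 * Q) := Real.sqrt_pos.mpr hD
  have hα1 : 1 < α := by
    rw [hα]
    rcases le_or_gt 2 P with h | h
    · linarith
    · have h2 : (2 - P) < Real.sqrt (P ^ 2 - 4 * Q) := by
        rw [Real.lt_sqrt (by linarith)]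
        nlinarith [hPQ1 h.le]
      linarith
  have hαpos : 0 < α := lt_trans one_pos hα1
  have hβlt : |β| < α := by
    rw [abs_lt]; constructor
    · rw [hα, hβ]; linarith
    · rw [hα, hβ]; linarith
  have hABpos : 0 < α - β := by rw [hα, hβ]; linarith
  set m0 : ℝ := (α - |β|) / (α * (α - β)) with hm0def
  set C0 : ℝ := 2 / (α - β) with hC0def
  have hm0 : 0 < m0 := div_pos (by linarith) (mul_pos hαpos hABpos)
  have hC0 : 0 < C0 := by positivity
  -- bounds for U
  have hUb : ∀ n : ℕ, 1 ≤ n → m0 * α ^ n ≤ U n ∧ U n ≤ C0 * α ^ n := by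
    intro n hn
    obtain ⟨k, rfl⟩ : ∃ k, n = k + 1 := ⟨n - 1, by omega⟩
    have hk : (0:ℝ) < α ^ k := pow_pos hαpos k
    have habs : |β| ^ (k + 1) ≤ |β| * α ^ k := by
      rw [pow_succ']
      exact mul_le_mul_of_nonneg_left (pow_le_pow_left₀ (abs_nonneg β) hβlt.le k) (abs_nonneg β)
    have hb1 : β ^ (k + 1) ≤ |β| * α ^ k := by
      calc β ^ (k + 1) ≤ |β ^ (k + 1)| := le_abs_self _
        _ = |β| ^ (k + 1) := abs_pow β (k + 1)
        _ ≤ |β| * α ^ k := habs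
    have hb2 : -(|β| * α ^ k) ≤ β ^ (k + 1) := by
      have h := neg_abs_le (β ^ (k + 1))
      rw [abs_pow] at h
      linarith
    rw [hU]
    constructor
    · rw [le_div_iff₀ hABpos]
      have hm0' : m0 * (α * (α - β)) = α - |β| := by
        rw [hm0def]; field_simp
      calc m0 * α ^ (k + 1) * (α - β) = m0 * (α * (α - β)) * α ^ k := by ring
        _ = (α - |β|) * α ^ k := by rw [hm0']
        _ ≤ α ^ (k + 1) - β ^ (k + 1) := by
            have : α ^ (k + 1) = α * α ^ k := pow_succ' α k
            nlinarith [hb1]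
    · rw [div_le_iff₀ hABpos]
      have hC0' : C0 * (α - β) = 2 := by rw [hC0def]; field_simp
      have hβα : |β| * α ^ k ≤ α ^ (k + 1) := by
        have : α ^ (k + 1) = α * α ^ k := pow_succ' α k
        nlinarith
      calc α ^ (k + 1) - β ^ (k + 1) ≤ α ^ (k + 1) + |β| * α ^ k := by linarith
        _ ≤ 2 * α ^ (k + 1) := by linarith
        _ = C0 * α ^ (k + 1) * (α - β) := by rw [mul_comm (C0 * α ^ (k+1)) (α - β),
              ← mul_assoc, mul_comm (α - β) C0, hC0']
  have hUpos : ∀ n : ℕ, 1 ≤ n → 0 < U n := fun n hn =>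
    lt_of_lt_of_le (by positivity) (hUb n hn).1
  set a : ℝ := Real.log α with ha
  have hapos : 0 < a := Real.log_pos hα1
  have hlog : ∀ n : ℕ, 1 ≤ n →
      Real.log m0 + n * a ≤ Real.log (U n) ∧ Real.log (U n) ≤ Real.log C0 + n * a := by
    intro n hn
    obtain ⟨h1, h2⟩ := hUb n hn
    have hUp := hUpos n hn
    constructor
    · have h := Real.log_le_log (by positivity) h1
      rwa [Real.log_mul (ne_of_gt hm0) (by positivity), Real.log_pow] at h
    · have h := Real.log_le_log hUp h2
      rwa [Real.log_mul (ne_of_gt hC0) (by positivity), Real.log_pow] at h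
  set σ : Fin d → ℝ := fun j => (s j).re with hσ
  set b : ℝ := max (-Real.log m0) (Real.log C0) with hbdef
  have hexp : ∀ (j : Fin d) (n : ℕ), 1 ≤ n →
      -σ j * Real.log (U n) ≤ |σ j| * b + -σ j * (n * a) := by
    intro j n hn
    obtain ⟨h1, h2⟩ := hlog n hn
    set L := Real.log (U n) with hL
    have hx : |L - n * a| ≤ b := by
      rw [abs_le]
      constructor
      · have := le_max_left (-Real.log m0) (Real.log C0); linarith
      · have := le_max_right (-Real.log m0) (Real.log C0); linarith
    have hkey : -(σ j * (L - n * a)) ≤ |σ j| * b := by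
      calc -(σ j * (L - n * a)) ≤ |σ j * (L - n * a)| := neg_le_abs _
        _ = |σ j| * |L - n * a| := abs_mul _ _
        _ ≤ |σ j| * b := mul_le_mul_of_nonneg_left hx (abs_nonneg _)
    nlinarith [hkey]
  -- gaps
  set prevF : (Fin d → ℕ) → Fin d → ℕ := fun n i =>
    if h : (i : ℕ) = 0 then 0 else n ⟨(i : ℕ) - 1, Nat.lt_of_le_of_lt (Nat.sub_le _ _) i.isLt⟩
    with hprevF
  set F : {n : Fin d → ℕ // StrictMono n ∧ ∀ j, 0 < n j} → (Fin d → ℕ) :=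
    fun n i => n.1 i - prevF n.1 i with hF
  have htel : ∀ (n : Fin d → ℕ), StrictMono n → (∀ j, 0 < n j) →
      ∀ (k : ℕ) (hk : k < d),
        ∑ i ∈ Finset.Iic (⟨k, hk⟩ : Fin d), (n i - prevF n i) = n ⟨k, hk⟩ := by
    intro n hmono hpos k
    induction k with
    | zero =>
      intro hk
      have hset : Finset.Iic (⟨0, hk⟩ : Fin d) = {⟨0, hk⟩} := by
        ext i
        simp only [Finset.mem_Iic, Finset.mem_singleton, Fin.le_def, Fin.ext_iff]
        omega
      rw [hset, Finset.sum_singleton]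
      simp [hprevF]
    | succ k ih =>
      intro hk
      have hk' : k < d := by omega
      have hins : Finset.Iic (⟨k + 1, hk⟩ : Fin d) =
          insert (⟨k + 1, hk⟩ : Fin d) (Finset.Iic (⟨k, hk'⟩ : Fin d)) := by
        ext i
        simp only [Finset.mem_Iic, Finset.mem_insert, Fin.le_def, Fin.ext_iff]
        omega
      have hnot : (⟨k + 1, hk⟩ : Fin d) ∉ Finset.Iic (⟨k, hk'⟩ : Fin d) := by
        simp only [Finset.mem_Iic, Fin.le_def]
        omega
      rw [hins, Finset.sum_insert hnot, ih hk']
      have hprev : prevF n ⟨k + 1, hk⟩ = n ⟨k, hk'⟩ := by simp [hprevF]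
      have hlt : n ⟨k, hk'⟩ < n ⟨k + 1, hk⟩ := hmono (by simp [Fin.lt_def])
      rw [hprev]
      omega
  have htel' : ∀ (n : {n : Fin d → ℕ // StrictMono n ∧ ∀ j, 0 < n j}) (j : Fin d),
      ∑ i ∈ Finset.Iic j, F n i = n.1 j := by
    intro n j
    have h := htel n.1 n.2.1 n.2.2 j.val j.isLt
    simpa [hF] using h
  have hFinj : Function.Injective F := by
    intro n n' h
    apply Subtype.ext
    funext j
    have h1 := htel' n j
    have h2 := htel' n' j
    rw [← h1, ← h2, h]
  -- partial sums of re s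
  set τ : Fin d → ℝ := fun i => ∑ j ∈ Finset.Ici i, σ j with hτdef
  have hτpos : ∀ i, 0 < τ i := fun i => hs i
  set r : Fin d → ℝ := fun i => Real.exp (-(a * τ i)) with hrdef
  have hr0 : ∀ i, 0 ≤ r i := fun i => (Real.exp_pos _).le
  have hr1 : ∀ i, r i < 1 := fun i =>
    Real.exp_lt_one_iff.mpr (neg_neg_iff_pos.mpr (mul_pos hapos (hτpos i)))
  set B : ℝ := ∑ j : Fin d, |σ j| * b with hBdef
  -- the key identity
  have hsum_id : ∀ n : {n : Fin d → ℕ // StrictMono n ∧ ∀ j, 0 < n j},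
      ∑ j : Fin d, σ j * (n.1 j : ℝ) = ∑ i : Fin d, τ i * (F n i : ℝ) := by
    intro n
    have h1 : ∀ j : Fin d, (n.1 j : ℝ) = ∑ i ∈ Finset.Iic j, (F n i : ℝ) := by
      intro j
      rw [← htel' n j]
      push_cast
      rfl
    calc ∑ j : Fin d, σ j * (n.1 j : ℝ)
        = ∑ j : Fin d, ∑ i ∈ Finset.Iic j, σ j * (F n i : ℝ) := by
          refine Finset.sum_congr rfl fun j _ => ?_
          rw [h1 j, Finset.mul_sum]
      _ = ∑ i : Fin d, ∑ j ∈ Finset.Ici i, σ j * (F n i : ℝ) := by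
          refine Finset.sum_comm' ?_
          intro x y
          simp [Finset.mem_Iic, Finset.mem_Ici]
      _ = ∑ i : Fin d, τ i * (F n i : ℝ) := by
          refine Finset.sum_congr rfl fun i _ => ?_
          rw [hτdef, Finset.sum_mul]
  -- pointwise bound
  have hbound : ∀ n : {n : Fin d → ℕ // StrictMono n ∧ ∀ j, 0 < n j},
      ‖∏ j : Fin d, χ j ((n.1 j : ℕ) : ZMod q) *
        Complex.exp (-(s j) * Real.log (U (n.1 j)))‖ ≤
      Real.exp B * ∏ i : Fin d, (r i) ^ (F n i) := by
    intro n
    have hnj : ∀ j, 1 ≤ n.1 j := fun j => n.2.2 j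
    calc ‖∏ j : Fin d, χ j ((n.1 j : ℕ) : ZMod q) *
            Complex.exp (-(s j) * Real.log (U (n.1 j)))‖
        = ∏ j : Fin d, ‖χ j ((n.1 j : ℕ) : ZMod q) *
            Complex.exp (-(s j) * Real.log (U (n.1 j)))‖ := norm_prod _ _
      _ ≤ ∏ j : Fin d, Real.exp (-σ j * Real.log (U (n.1 j))) := by
          refine Finset.prod_le_prod (fun j _ => norm_nonneg _) (fun j _ => ?_)
          rw [norm_mul]
          have hnorm : ‖Complex.exp (-(s j) * (Real.log (U (n.1 j)) : ℂ))‖ =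
              Real.exp (-σ j * Real.log (U (n.1 j))) := by
            rw [Complex.norm_exp]
            congr 1
            simp [Complex.mul_re, hσ]
          rw [hnorm]
          calc ‖χ j ((n.1 j : ℕ) : ZMod q)‖ * Real.exp (-σ j * Real.log (U (n.1 j)))
              ≤ 1 * Real.exp (-σ j * Real.log (U (n.1 j))) :=
                mul_le_mul_of_nonneg_right (DirichletCharacter.norm_le_one _ _)
                  (Real.exp_nonneg _)
            _ = Real.exp (-σ j * Real.log (U (n.1 j))) := one_mul _
      _ = Real.exp (∑ j : Fin d, -σ j * Real.log (U (n.1 j))) := (Real.exp_sum _ _).symm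
      _ ≤ Real.exp (∑ j : Fin d, (|σ j| * b + -σ j * ((n.1 j : ℝ) * a))) :=
          Real.exp_le_exp.mpr (Finset.sum_le_sum fun j _ => hexp j (n.1 j) (hnj j))
      _ = Real.exp (B + -(a * ∑ j : Fin d, σ j * (n.1 j : ℝ))) := by
          congr 1
          rw [Finset.sum_add_distrib, hBdef]
          congr 1
          rw [Finset.mul_sum, ← Finset.sum_neg_distrib]
          exact Finset.sum_congr rfl fun j _ => by ring
      _ = Real.exp B * Real.exp (-(a * ∑ i : Fin d, τ i * (F n i : ℝ))) := by
          rw [hsum_id n, Real.exp_add]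
      _ = Real.exp B * ∏ i : Fin d, (r i) ^ (F n i) := by
          congr 1
          have : -(a * ∑ i : Fin d, τ i * (F n i : ℝ)) =
              ∑ i : Fin d, (F n i : ℝ) * (-(a * τ i)) := by
            rw [Finset.mul_sum, ← Finset.sum_neg_distrib]
            exact Finset.sum_congr rfl fun i _ => by ring
          rw [this, Real.exp_sum]
          exact Finset.prod_congr rfl fun i _ => Real.exp_nat_mul _ _
  have hG : Summable (fun g : Fin d → ℕ => ∏ i : Fin d, (r i) ^ (g i)) :=
    aux_pi_summable r hr0 hr1
  have hS : Summable ((fun g : Fin d → ℕ => Real.exp B * ∏ i : Fin d, (r i) ^ (g i)) ∘ F) :=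
    (hG.mul_left (Real.exp B)).comp_injective hFinj
  exact Summable.of_nonneg_of_le (fun n => norm_nonneg _) hbound hS
end

section
/- Let f₁,…,f_d : ℤ → ℂ* be group homomorphisms (additive characters) such that the partial products ∏_{k=i}^d |f_k(1)| ≤ 1 for all 1 ≤ i ≤ d. Then for (s₁,…,s_d) ∈ 𝔇_d the series ∑_{0<n₁<⋯<n_d} f₁(n₁)⋯f_d(n_d)/(U_{n₁}^{s₁}⋯U_{n_d}^{s_d}) converges absolutely. -/
open Finset

-- auxiliary: rpow of a sum is a product
private lemma rpow_finset_sum {ι : Type*} (x : ℝ) (hx : 0 < x) (s : Finset ι) (g : ι → ℝ) :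
    x ^ (∑ i ∈ s, g i) = ∏ i ∈ s, x ^ g i := by
  induction s using Finset.cons_induction with
  | empty => simp
  | cons a t ha ih => rw [Finset.sum_cons, Finset.prod_cons, Real.rpow_add hx, ih]

-- auxiliary: summability of a product of geometric series over a pi type
set_option maxHeartbeats 1000000 in
private lemma summable_pi_geom {d : ℕ} (r : Fin d → ℝ) (h0 : ∀ i, 0 ≤ r i) (h1 : ∀ i, r i < 1) :
    Summable (fun m : Fin d → ℕ => ∏ i, r i ^ m i) := by
  induction d with
  | zero =>
      haveI : Subsingleton (Fin 0 → ℕ) := ⟨fun a b => funext fun i => i.elim0⟩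
      haveI : Finite (Fin 0 → ℕ) := Finite.of_subsingleton
      exact Summable.of_finite
  | succ d ih =>
      have hgeo : Summable (fun n : ℕ => r 0 ^ n) := summable_geometric_of_lt_one (h0 0) (h1 0)
      have hrec : Summable (fun m : Fin d → ℕ => ∏ i, (r i.succ) ^ m i) :=
        ih (fun i => r i.succ) (fun i => h0 _) (fun i => h1 _)
      have hn1 : 0 ≤ (fun n : ℕ => r 0 ^ n) := Pi.le_def.mpr fun n => pow_nonneg (h0 0) n
      have hn2 : 0 ≤ (fun m : Fin d → ℕ => ∏ i, (r i.succ) ^ m i) :=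
        Pi.le_def.mpr fun m => Finset.prod_nonneg fun i _ => pow_nonneg (h0 _) _
      have hs := hgeo.mul_of_nonneg hrec hn1 hn2
      refine (Fin.consEquiv (fun _ : Fin (d+1) => ℕ)).summable_iff.mp (hs.congr fun p => ?_)
      simp only [Function.comp_apply, Fin.consEquiv_apply]
      rw [Fin.prod_univ_succ]
      simp [Fin.cons_zero, Fin.cons_succ]

-- the difference map on strictly increasing tuples
private def diffMap (d : ℕ) (n : Fin d → ℕ) : Fin d → ℕ :=
  fun i => n i - (if h : 0 < i.val then n ⟨i.val - 1, lt_of_le_of_lt (Nat.sub_le _ _) i.isLt⟩ else 0)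

private lemma diffMap_prev_lt {d : ℕ} {n : Fin d → ℕ} (hn : StrictMono n) (hn' : ∀ j, 0 < n j)
    (i : Fin d) :
    (if h : 0 < i.val then n ⟨i.val - 1, lt_of_le_of_lt (Nat.sub_le _ _) i.isLt⟩ else 0) < n i := by
  split_ifs with h
  · exact hn (by rw [Fin.lt_def]; simp; omega)
  · exact hn' i

private lemma diffMap_add {d : ℕ} {n : Fin d → ℕ} (hn : StrictMono n) (hn' : ∀ j, 0 < n j)
    (i : Fin d) :
    diffMap d n i + (if h : 0 < i.val then n ⟨i.val - 1, lt_of_le_of_lt (Nat.sub_le _ _) i.isLt⟩ else 0) = n i :=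
  Nat.sub_add_cancel (diffMap_prev_lt hn hn' i).le

private lemma diffMap_sum {d : ℕ} {n : Fin d → ℕ} (hn : StrictMono n) (hn' : ∀ j, 0 < n j)
    (j : Fin d) : ∑ i ∈ Finset.Iic j, diffMap d n i = n j := by
  suffices H : ∀ k (hk : k < d), ∑ i ∈ Finset.Iic (⟨k, hk⟩ : Fin d), diffMap d n i = n ⟨k, hk⟩ by
    simpa using H j.val j.isLt
  intro k
  induction k with
  | zero =>
      intro hk
      rw [show (Finset.Iic (⟨0, hk⟩ : Fin d)) = {⟨0, hk⟩} from by
        ext y; simp [Fin.le_def, Fin.ext_iff]]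
      rw [Finset.sum_singleton]
      have := diffMap_add hn hn' (⟨0, hk⟩ : Fin d)
      simpa using this
  | succ k ihk =>
      intro hk
      have hk' : k < d := by omega
      have hsplit : Finset.Iic (⟨k+1, hk⟩ : Fin d) = insert ⟨k+1, hk⟩ (Finset.Iic ⟨k, hk'⟩) := by
        ext y; simp [Fin.le_def, Fin.ext_iff]; omega
      rw [hsplit, Finset.sum_insert (by simp [Fin.le_def]), ihk hk']
      have h1 := diffMap_add hn hn' (⟨k+1, hk⟩ : Fin d)
      rw [dif_pos (by simp)] at h1
      simp only [show k + 1 - 1 = k from rfl] at h1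
      omega

private lemma diffMap_inj {d : ℕ} {a b : Fin d → ℕ}
    (ha : StrictMono a) (ha' : ∀ j, 0 < a j) (hb : StrictMono b) (hb' : ∀ j, 0 < b j)
    (hab : diffMap d a = diffMap d b) : a = b := by
  funext i
  have := congrArg (fun g => ∑ i ∈ Finset.Iic i, g i) hab
  simpa [diffMap_sum ha ha', diffMap_sum hb hb'] using this

/-- For additive characters `f₁,…,f_d : ℤ → ℂ*` whose partial products
satisfy `∏_{k=i}^d |f_k(1)| ≤ 1` for all `i`, the multiple Lucas additive `L`-series
converges absolutely on `𝔇_d`. -/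
theorem stmt6 (P Q : ℝ) (hP : 0 < P) (hQ : Q ≠ 0)
    (hPQ1 : P ≤ 2 → Q < P - 1) (hPQ2 : 2 < P → Q ≤ P - 1)
    (α β : ℝ) (hα : α = (P + Real.sqrt (P ^ 2 - 4 * Q)) / 2)
    (hβ : β = (P - Real.sqrt (P ^ 2 - 4 * Q)) / 2)
    (U : ℕ → ℝ) (hU : ∀ n, U n = (α ^ n - β ^ n) / (α - β))
    (d : ℕ) (f : Fin d → AddChar ℤ ℂˣ)
    (hf : ∀ i : Fin d, ∏ k ∈ Finset.Ici i, ‖((f k 1 : ℂˣ) : ℂ)‖ ≤ 1)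
    (s : Fin d → ℂ)
    (hs : ∀ j : Fin d, 0 < ∑ i ∈ Finset.Ici j, (s i).re) :
    Summable (fun n : {n : Fin d → ℕ // StrictMono n ∧ ∀ j, 0 < n j} =>
      ‖∏ j : Fin d, ((f j (n.1 j : ℤ) : ℂˣ) : ℂ) *
        Complex.exp (-(s j) * Real.log (U (n.1 j)))‖) := by
  -- basic facts about α, β
  have hDpos : 0 < P ^ 2 - 4 * Q := by
    rcases le_or_gt P 2 with h | h
    · have := hPQ1 h; nlinarith
    · have := hPQ2 h; nlinarith
  have hS0 : 0 ≤ Real.sqrt (P ^ 2 - 4 * Q) := Real.sqrt_nonneg _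
  have hSpos : 0 < Real.sqrt (P ^ 2 - 4 * Q) := Real.sqrt_pos.mpr hDpos
  have hS2 : Real.sqrt (P ^ 2 - 4 * Q) ^ 2 = P ^ 2 - 4 * Q := Real.sq_sqrt hDpos.le
  have hα1 : 1 < α := by
    rcases le_or_gt P 2 with h | h
    · have hq := hPQ1 h; rw [hα]; nlinarith
    · rw [hα]; nlinarith
  have hαpos : 0 < α := lt_trans one_pos hα1
  have hαβpos : 0 < α - β := by rw [hα, hβ]; linarith
  have hβα : |β| < α := by
    rw [abs_lt]
    constructor
    · rw [hα, hβ]; linarith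
    · linarith
  -- bounds on U
  set c : ℝ := (1 - |β| / α) / (α - β) with hc_def
  set C : ℝ := 2 / (α - β) with hC_def
  have hβα1 : |β| / α < 1 := (div_lt_one hαpos).mpr hβα
  have hc : 0 < c := div_pos (by linarith) hαβpos
  have hC : 0 < C := div_pos two_pos hαβpos
  have hUlb : ∀ n : ℕ, 1 ≤ n → c * α ^ n ≤ U n := by
    intro n hn
    have h1 : |β| ^ n ≤ (|β| / α) * α ^ n := by
      have h2 : (|β| / α) ^ n ≤ |β| / α :=
        pow_le_of_le_one (div_nonneg (abs_nonneg β) hαpos.le) hβα1.le (by omega)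
      calc |β| ^ n = (|β| / α) ^ n * α ^ n := by
            rw [div_pow, div_mul_cancel₀ _ (pow_pos hαpos n).ne']
        _ ≤ (|β| / α) * α ^ n := mul_le_mul_of_nonneg_right h2 (pow_nonneg hαpos.le n)
    have h2 : β ^ n ≤ |β| ^ n := by rw [← abs_pow]; exact le_abs_self _
    have key : (1 - |β| / α) * α ^ n ≤ α ^ n - β ^ n := by nlinarith
    calc c * α ^ n = ((1 - |β| / α) * α ^ n) / (α - β) := by rw [hc_def]; ring
      _ ≤ (α ^ n - β ^ n) / (α - β) := by gcongr
      _ = U n := (hU n).symm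
  have hUub : ∀ n : ℕ, 1 ≤ n → U n ≤ C * α ^ n := by
    intro n hn
    have h1 : |β| ^ n ≤ α ^ n := pow_le_pow_left₀ (abs_nonneg β) hβα.le n
    have h2 : -|β| ^ n ≤ β ^ n := by rw [← abs_pow]; exact neg_abs_le _
    have key : α ^ n - β ^ n ≤ 2 * α ^ n := by nlinarith
    calc U n = (α ^ n - β ^ n) / (α - β) := hU n
      _ ≤ (2 * α ^ n) / (α - β) := by gcongr
      _ = C * α ^ n := by rw [hC_def]; ring
  have hUpos : ∀ n : ℕ, 1 ≤ n → 0 < U n := fun n hn =>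
    lt_of_lt_of_le (mul_pos hc (pow_pos hαpos n)) (hUlb n hn)
  -- notation
  set σ : Fin d → ℝ := fun j => (s j).re with hσ_def
  set φ : Fin d → ℝ := fun j => ‖((f j 1 : ℂˣ) : ℂ)‖ with hφ_def
  have hφ0 : ∀ j, 0 ≤ φ j := fun j => norm_nonneg _
  set x : Fin d → ℝ := fun j => φ j * α ^ (-σ j) with hx_def
  have hx0 : ∀ j, 0 ≤ x j := fun j => mul_nonneg (hφ0 j) (Real.rpow_nonneg hαpos.le _)
  set r : Fin d → ℝ := fun i => ∏ j ∈ Finset.Ici i, x j with hr_def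
  have hr0 : ∀ i, 0 ≤ r i := fun i => Finset.prod_nonneg fun j _ => hx0 j
  have hr1 : ∀ i, r i < 1 := by
    intro i
    have h1 : r i = (∏ j ∈ Finset.Ici i, φ j) * α ^ (-(∑ j ∈ Finset.Ici i, σ j)) := by
      rw [hr_def]
      simp only [hx_def]
      rw [Finset.prod_mul_distrib]
      congr 1
      rw [← rpow_finset_sum α hαpos, Finset.sum_neg_distrib]
    rw [h1]
    calc (∏ j ∈ Finset.Ici i, φ j) * α ^ (-(∑ j ∈ Finset.Ici i, σ j))
        ≤ 1 * α ^ (-(∑ j ∈ Finset.Ici i, σ j)) :=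
          mul_le_mul_of_nonneg_right (hf i) (Real.rpow_nonneg hαpos.le _)
      _ < 1 := by
          rw [one_mul]
          exact Real.rpow_lt_one_of_one_lt_of_neg hα1 (neg_lt_zero.mpr (hs i))
  -- the constant K
  set Kj : Fin d → ℝ := fun j => max (c ^ (-σ j)) (C ^ (-σ j)) with hKj_def
  have hKj0 : ∀ j, 0 ≤ Kj j := fun j => le_trans (Real.rpow_nonneg hc.le _) (le_max_left _ _)
  set K : ℝ := ∏ j, Kj j with hK_def
  -- per-factor norm computations
  have hchar : ∀ (j : Fin d) (m : ℕ), ‖((f j (m : ℤ) : ℂˣ) : ℂ)‖ = φ j ^ m := by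
    intro j m
    have h1 : ((m : ℤ)) = m • (1 : ℤ) := by simp
    rw [h1, AddChar.map_nsmul_eq_pow]
    rw [Units.val_pow_eq_pow_val, norm_pow]
  have hexp : ∀ (j : Fin d) (m : ℕ), 1 ≤ m →
      ‖Complex.exp (-(s j) * (Real.log (U m) : ℂ))‖ = (U m) ^ (-σ j) := by
    intro j m hm
    rw [Complex.norm_exp, Real.rpow_def_of_pos (hUpos m hm)]
    congr 1
    simp [Complex.mul_re]
    ring
  -- key rpow bound
  have hUK : ∀ (j : Fin d) (m : ℕ), 1 ≤ m → (U m) ^ (-σ j) ≤ Kj j * (α ^ (-σ j)) ^ m := by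
    intro j m hm
    have hαm : (α ^ (-σ j)) ^ m = (α ^ m : ℝ) ^ (-σ j) := by
      rw [← Real.rpow_natCast α m, ← Real.rpow_natCast (α ^ (-σ j)) m,
        ← Real.rpow_mul hαpos.le, ← Real.rpow_mul hαpos.le, mul_comm]
    rw [hαm]
    have hαmpos : (0:ℝ) < α ^ m := pow_pos hαpos m
    rcases le_or_gt 0 (-σ j) with hσj | hσj
    · calc (U m) ^ (-σ j) ≤ (C * α ^ m) ^ (-σ j) :=
            Real.rpow_le_rpow (hUpos m hm).le (hUub m hm) hσj
        _ = C ^ (-σ j) * (α ^ m) ^ (-σ j) := Real.mul_rpow hC.le hαmpos.le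
        _ ≤ Kj j * (α ^ m) ^ (-σ j) :=
            mul_le_mul_of_nonneg_right (le_max_right _ _) (Real.rpow_nonneg hαmpos.le _)
    · calc (U m) ^ (-σ j) ≤ (c * α ^ m) ^ (-σ j) :=
            Real.rpow_le_rpow_of_nonpos (mul_pos hc hαmpos) (hUlb m hm) hσj.le
        _ = c ^ (-σ j) * (α ^ m) ^ (-σ j) := Real.mul_rpow hc.le hαmpos.le
        _ ≤ Kj j * (α ^ m) ^ (-σ j) :=
            mul_le_mul_of_nonneg_right (le_max_left _ _) (Real.rpow_nonneg hαmpos.le _)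
  -- key product identity
  have hprod_id : ∀ n : {n : Fin d → ℕ // StrictMono n ∧ ∀ j, 0 < n j},
      ∏ i, r i ^ (diffMap d n.1 i) = ∏ j, x j ^ (n.1 j) := by
    intro n
    have h1 : ∏ i, r i ^ (diffMap d n.1 i)
        = ∏ i : Fin d, ∏ j ∈ Finset.Ici i, x j ^ (diffMap d n.1 i) := by
      refine Finset.prod_congr rfl fun i _ => ?_
      rw [hr_def, Finset.prod_pow]
    rw [h1]
    rw [Finset.prod_comm' (t' := Finset.univ) (s' := fun j => Finset.Iic j)
      (fun i j => by simp [Finset.mem_Ici, Finset.mem_Iic])]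
    refine Finset.prod_congr rfl fun j _ => ?_
    rw [Finset.prod_pow_eq_pow_sum, diffMap_sum n.2.1 n.2.2]
  -- the termwise bound
  have hbound : ∀ n : {n : Fin d → ℕ // StrictMono n ∧ ∀ j, 0 < n j},
      ‖∏ j : Fin d, ((f j (n.1 j : ℤ) : ℂˣ) : ℂ) *
        Complex.exp (-(s j) * Real.log (U (n.1 j)))‖ ≤ K * ∏ i, r i ^ (diffMap d n.1 i) := by
    intro n
    rw [norm_prod]
    have h1 : ∀ j : Fin d, ‖((f j (n.1 j : ℤ) : ℂˣ) : ℂ) *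
        Complex.exp (-(s j) * Real.log (U (n.1 j)))‖ = φ j ^ (n.1 j) * (U (n.1 j)) ^ (-σ j) := by
      intro j
      rw [norm_mul, hchar, hexp j (n.1 j) (n.2.2 j)]
    rw [Finset.prod_congr rfl fun j _ => h1 j, hprod_id n]
    calc ∏ j, φ j ^ (n.1 j) * (U (n.1 j)) ^ (-σ j)
        ≤ ∏ j, Kj j * x j ^ (n.1 j) := by
          refine Finset.prod_le_prod (fun j _ => mul_nonneg (pow_nonneg (hφ0 j) _)
            (Real.rpow_nonneg (hUpos _ (n.2.2 j)).le _)) (fun j _ => ?_)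
          have h2 : x j ^ (n.1 j) = φ j ^ (n.1 j) * (α ^ (-σ j)) ^ (n.1 j) := by
            rw [hx_def]; exact mul_pow _ _ _
          rw [h2, ← mul_assoc, mul_comm (Kj j) (φ j ^ (n.1 j)), mul_assoc]
          exact mul_le_mul_of_nonneg_left (hUK j (n.1 j) (n.2.2 j)) (pow_nonneg (hφ0 j) _)
      _ = K * ∏ j, x j ^ (n.1 j) := by rw [Finset.prod_mul_distrib, hK_def]
  -- conclude
  refine Summable.of_nonneg_of_le (fun n => norm_nonneg _) hbound ?_
  have hinj : Function.Injective
      (fun n : {n : Fin d → ℕ // StrictMono n ∧ ∀ j, 0 < n j} => diffMap d n.1) := by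
    intro a b hab
    exact Subtype.ext (diffMap_inj a.2.1 a.2.2 b.2.1 b.2.2 hab)
  have hsummable : Summable (fun m : Fin d → ℕ => K * ∏ i, r i ^ m i) :=
    (summable_pi_geom r hr0 hr1).mul_left K
  exact hsummable.comp_injective hinj
end

section
/- For all complex z and all positive integers m (with m = qn + r for nonnegative integers), the Lucas number power satisfies the binomial expansion U_m^{-z} = D^{z/2} ∑_{k=0}^∞ C(-z, k) (-1)^k Q^{mk} α^{-m(z+2k)}, where the series converges absolutely. -/
open Complex Finset

private lemma fc_hasDerivAt (c w : ℂ) (hw : 1 + w ∈ Complex.slitPlane) :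
    HasDerivAt (fun u : ℂ => Complex.exp (c * Complex.log (1 + u)))
      (c * Complex.exp ((c - 1) * Complex.log (1 + w))) w := by
  have h3 : HasDerivAt (fun u : ℂ => Complex.log (1 + u)) ((1 + w)⁻¹) w :=
    (Complex.hasDerivAt_log hw).comp_const_add 1 w
  have h5 := (h3.const_mul c).cexp
  refine h5.congr_deriv ?_
  have hne : (1 : ℂ) + w ≠ 0 := Complex.slitPlane_ne_zero hw
  rw [sub_one_mul, Complex.exp_sub, Complex.exp_log hne]
  field_simp

private lemma fc_iter (n : ℕ) (c : ℂ) :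
    ∀ w ∈ Metric.ball (0 : ℂ) 1,
      iteratedDeriv n (fun u : ℂ => Complex.exp (c * Complex.log (1 + u))) w =
        (∏ i ∈ Finset.range n, (c - (i : ℂ))) *
          Complex.exp ((c - n) * Complex.log (1 + w)) := by
  have hslit : ∀ w : ℂ, w ∈ Metric.ball (0 : ℂ) 1 → 1 + w ∈ Complex.slitPlane := by
    intro w hw
    rw [mem_ball_zero_iff] at hw
    refine Or.inl ?_
    have h1 : |w.re| ≤ ‖w‖ := Complex.abs_re_le_norm w
    have : ‖w‖ < 1 := hw
    simp only [Complex.add_re, Complex.one_re]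
    cases' abs_le.mp h1 with h1a h1b
    linarith
  induction n generalizing c with
  | zero => intro w hw; simp
  | succ n ih =>
    intro w hw
    rw [iteratedDeriv_succ]
    have heq : iteratedDeriv n (fun u : ℂ => Complex.exp (c * Complex.log (1 + u))) =ᶠ[nhds w]
        fun u => (∏ i ∈ Finset.range n, (c - (i : ℂ))) *
          Complex.exp ((c - n) * Complex.log (1 + u)) :=
      Filter.eventuallyEq_of_mem (Metric.isOpen_ball.mem_nhds hw) (fun u hu => ih c u hu)
    rw [heq.deriv_eq]
    have hd := fc_hasDerivAt (c - n) w (hslit w hw)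
    rw [deriv_const_mul _ hd.differentiableAt, hd.deriv, Finset.prod_range_succ]
    rw [mul_assoc]
    congr 2
    push_cast
    ring_nf

private lemma binom_hasSum (c : ℂ) {x : ℝ} (hx : |x| < 1) :
    HasSum (fun k : ℕ => (∏ i ∈ Finset.range k, (c - (i : ℂ))) / (Nat.factorial k : ℂ) *
        (x : ℂ) ^ k)
      (Complex.exp (c * Real.log (1 + x))) := by
  have hslit : ∀ w : ℂ, w ∈ Metric.ball (0 : ℂ) 1 → 1 + w ∈ Complex.slitPlane := by
    intro w hw
    rw [mem_ball_zero_iff] at hw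
    refine Or.inl ?_
    have h1 : |w.re| ≤ ‖w‖ := Complex.abs_re_le_norm w
    have : ‖w‖ < 1 := hw
    simp only [Complex.add_re, Complex.one_re]
    cases' abs_le.mp h1 with h1a h1b
    linarith
  have hdiff : DifferentiableOn ℂ (fun u : ℂ => Complex.exp (c * Complex.log (1 + u)))
      (Metric.ball (0 : ℂ) 1) :=
    fun w hw => (fc_hasDerivAt c w (hslit w hw)).differentiableAt.differentiableWithinAt
  have hmem : (x : ℂ) ∈ Metric.ball (0 : ℂ) 1 := by
    rw [mem_ball_zero_iff]
    simpa using hx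
  have H := Complex.hasSum_taylorSeries_on_ball hdiff hmem
  have h0 : (0 : ℂ) ∈ Metric.ball (0 : ℂ) 1 := by simp
  have hterm : ∀ k : ℕ, ((Nat.factorial k : ℂ))⁻¹ • ((x : ℂ) - 0) ^ k •
      iteratedDeriv k (fun u : ℂ => Complex.exp (c * Complex.log (1 + u))) 0 =
      (∏ i ∈ Finset.range k, (c - (i : ℂ))) / (Nat.factorial k : ℂ) * (x : ℂ) ^ k := by
    intro k
    rw [fc_iter k c 0 h0]
    simp only [smul_eq_mul, sub_zero, add_zero, Complex.log_one, mul_zero, Complex.exp_zero,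
      mul_one]
    ring
  have hval : Complex.exp (c * Complex.log (1 + (x : ℂ))) =
      Complex.exp (c * Real.log (1 + x)) := by
    have h1x : (0 : ℝ) < 1 + x := by cases' abs_lt.mp hx with h _; linarith
    have hlog : Complex.log (1 + (x : ℂ)) = ((Real.log (1 + x) : ℝ) : ℂ) := by
      rw [Complex.ofReal_log h1x.le]
      norm_cast
    rw [hlog]
  rw [funext hterm, hval] at H
  exact H

/-- Binomial expansion of Lucas number powers: for all `z : ℂ` and `m ≥ 1`,
`U_m^{-z} = D^{z/2} ∑_{k≥0} C(-z,k) (-1)^k Q^{mk} α^{-m(z+2k)}`, the series converging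
absolutely.  Here `C(-z,k) = (∏_{i<k} (-z-i))/k!` is the generalized binomial coefficient,
and complex powers of positive reals are taken via the real logarithm. -/
theorem stmt8 (P Q : ℝ) (hP : 0 < P) (hQ : Q ≠ 0)
    (hPQ1 : P ≤ 2 → Q < P - 1) (hPQ2 : 2 < P → Q ≤ P - 1)
    (α β : ℝ) (hα : α = (P + Real.sqrt (P ^ 2 - 4 * Q)) / 2)
    (hβ : β = (P - Real.sqrt (P ^ 2 - 4 * Q)) / 2)
    (U : ℕ → ℝ) (hU : ∀ n, U n = (α ^ n - β ^ n) / (α - β))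
    (z : ℂ) (m : ℕ) (hm : 1 ≤ m) :
    Summable (fun k : ℕ =>
      ‖(∏ i ∈ Finset.range k, (-z - (i : ℂ))) / (Nat.factorial k : ℂ) * (-1) ^ k *
        ((Q ^ (m * k) : ℝ) : ℂ) *
        Complex.exp (-(m : ℂ) * (z + 2 * (k : ℂ)) * Real.log α)‖) ∧
    Complex.exp (-z * Real.log (U m)) =
      Complex.exp ((z / 2) * Real.log (P ^ 2 - 4 * Q)) *
        ∑' k : ℕ,
          (∏ i ∈ Finset.range k, (-z - (i : ℂ))) / (Nat.factorial k : ℂ) * (-1) ^ k *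
            ((Q ^ (m * k) : ℝ) : ℂ) *
            Complex.exp (-(m : ℂ) * (z + 2 * (k : ℂ)) * Real.log α) := by
  set D : ℝ := P ^ 2 - 4 * Q with hD_def
  have hD : 0 < D := by
    rcases le_or_gt P 2 with h | h
    · have := hPQ1 h; nlinarith
    · have := hPQ2 h; nlinarith
  set s : ℝ := Real.sqrt D with hs_def
  have hs2 : s ^ 2 = D := Real.sq_sqrt hD.le
  have hs0 : 0 < s := Real.sqrt_pos.mpr hD
  have hα1 : 1 < α := by
    rw [hα]
    rcases le_or_gt P 2 with h | h
    · have hq := hPQ1 h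
      nlinarith [hs2, hs0]
    · linarith
  have hα0 : 0 < α := lt_trans one_pos hα1
  have hβα : |β| < α := by
    rw [abs_lt, hα, hβ]
    constructor <;> [linarith; linarith]
  have hαβ : α * β = Q := by rw [hα, hβ]; nlinarith [hs2]
  have hαmβ : α - β = s := by rw [hα, hβ]; ring
  set r : ℝ := β / α with hr_def
  have hrabs : |r| < 1 := by
    rw [hr_def, abs_div, abs_of_pos hα0, div_lt_one hα0]; exact hβα
  have hrm : |r ^ m| < 1 := by
    rw [_root_.abs_pow]
    calc |r| ^ m ≤ |r| ^ 1 := pow_le_pow_of_le_one (abs_nonneg r) hrabs.le hm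
    _ = |r| := pow_one _
    _ < 1 := hrabs
  have hx : |(-(r ^ m))| < 1 := by rwa [abs_neg]
  have h1x : 0 < 1 - r ^ m := by
    have := (abs_lt.mp hrm).2; linarith
  have hr2 : r = Q / α ^ 2 := by
    rw [hr_def, ← hαβ]; field_simp
  have hUm_eq : U m = α ^ m * (1 - r ^ m) / s := by
    rw [hU m, hαmβ, hr_def, div_pow]
    field_simp
  have hUm0 : 0 < U m := by
    rw [hUm_eq]; exact div_pos (mul_pos (pow_pos hα0 m) h1x) hs0
  have hlogU : Real.log (U m) =
      m * Real.log α + Real.log (1 - r ^ m) - Real.log D / 2 := by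
    rw [hUm_eq, Real.log_div (by positivity) hs0.ne', Real.log_mul (by positivity) h1x.ne',
      Real.log_pow, hs_def, Real.log_sqrt hD.le]
  have hexpα : Complex.exp ((Real.log α : ℝ) : ℂ) = (α : ℂ) := by
    rw [← Complex.ofReal_exp, Real.exp_log hα0]
  have hexp : ∀ k : ℕ, Complex.exp (-(m : ℂ) * (z + 2 * (k : ℂ)) * Real.log α) =
      Complex.exp (-z * m * Real.log α) * ((α : ℂ) ^ (2 * (m * k)))⁻¹ := by
    intro k
    have h1 : -(m : ℂ) * (z + 2 * (k : ℂ)) * (Real.log α : ℂ) =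
        -z * m * (Real.log α : ℂ) +
          -(((2 * (m * k) : ℕ) : ℂ) * (Real.log α : ℂ)) := by
      push_cast; ring
    rw [h1, Complex.exp_add, Complex.exp_neg, Complex.exp_nat_mul, hexpα]
  have hrpow : ∀ k : ℕ, (-(r ^ m)) ^ k = (-1 : ℝ) ^ k * (Q ^ (m * k) / α ^ (2 * (m * k))) := by
    intro k
    rw [neg_pow, ← pow_mul, hr2, div_pow, ← pow_mul]
  have HS := binom_hasSum (-z) hx
  have HS2 := HS.mul_right (Complex.exp (-z * m * Real.log α))
  have hfun : (fun k : ℕ =>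
      (∏ i ∈ Finset.range k, (-z - (i : ℂ))) / (Nat.factorial k : ℂ) * (-1) ^ k *
        ((Q ^ (m * k) : ℝ) : ℂ) *
        Complex.exp (-(m : ℂ) * (z + 2 * (k : ℂ)) * Real.log α)) =
      fun k : ℕ =>
        (∏ i ∈ Finset.range k, (-z - (i : ℂ))) / (Nat.factorial k : ℂ) *
          ((-(r ^ m) : ℝ) : ℂ) ^ k * Complex.exp (-z * m * Real.log α) := by
    funext k
    rw [hexp k, show ((-(r ^ m) : ℝ) : ℂ) ^ k =
      ((((-1 : ℝ)) ^ k * (Q ^ (m * k) / α ^ (2 * (m * k))) : ℝ) : ℂ) from by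
        rw [← Complex.ofReal_pow, hrpow k]]
    push_cast
    have hαne : ((α : ℂ)) ^ (2 * (m * k)) ≠ 0 := pow_ne_zero _ (by exact_mod_cast hα0.ne')
    field_simp
  have HS3 : HasSum (fun k : ℕ =>
      (∏ i ∈ Finset.range k, (-z - (i : ℂ))) / (Nat.factorial k : ℂ) * (-1) ^ k *
        ((Q ^ (m * k) : ℝ) : ℂ) *
        Complex.exp (-(m : ℂ) * (z + 2 * (k : ℂ)) * Real.log α))
      (Complex.exp (-z * Real.log (1 + -(r ^ m))) * Complex.exp (-z * m * Real.log α)) := by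
    rw [hfun]; exact HS2
  refine ⟨summable_norm_iff.mpr HS3.summable, ?_⟩
  rw [HS3.tsum_eq]
  have hlog1 : (1 : ℝ) + -(r ^ m) = 1 - r ^ m := by ring
  rw [hlog1, ← Complex.exp_add, ← Complex.exp_add]
  congr 1
  have hcast : ((Real.log (U m) : ℝ) : ℂ) =
      (m : ℂ) * (Real.log α : ℂ) + ((Real.log (1 - r ^ m) : ℝ) : ℂ) -
        ((Real.log D : ℝ) : ℂ) / 2 := by
    rw [hlogU]; push_cast; ring
  rw [hcast]
  ring
end

section
/- Let P, Q be rational numbers satisfying the standing hypotheses, such that √D is irrational, where D = P² - 4Q, and let α = (P + √D)/2 > 1. Then log|Q| / log α is rational if and only if Q = ±1. -/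
lemma aux_pow14 (P D : ℚ) (hP : 0 < P) (hD : 0 < D) :
    ∀ n : ℕ, ∃ x y : ℚ, 0 < x ∧ 0 < y ∧
      (((P:ℝ) + Real.sqrt D)/2)^(n+1) = (x:ℝ) + (y:ℝ) * Real.sqrt D := by
  intro n
  induction n with
  | zero => exact ⟨P/2, 1/2, by positivity, by norm_num, by push_cast; ring⟩
  | succ m ih =>
    obtain ⟨x, y, hx, hy, hxy⟩ := ih
    refine ⟨(x*P + y*D)/2, (x + y*P)/2, by positivity, by positivity, ?_⟩
    have hs : Real.sqrt D * Real.sqrt D = (D:ℝ) :=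
      Real.mul_self_sqrt (by positivity)
    rw [pow_succ, hxy]
    push_cast
    linear_combination ((y:ℝ)/2) * hs

/-- For rational `P, Q` satisfying the standing hypotheses with `√D`
irrational (`D = P² - 4Q`), the ratio `log|Q|/log α` is rational iff `Q = ±1`,
where `α = (P + √D)/2 > 1` is the larger root of `x² - Px + Q`. -/
theorem stmt14 (P Q : ℚ) (hP : 0 < P) (hQ : Q ≠ 0)
    (hPQ1 : P ≤ 2 → Q < P - 1) (hPQ2 : 2 < P → Q ≤ P - 1)
    (hirr : Irrational (Real.sqrt ((P : ℝ) ^ 2 - 4 * (Q : ℝ)))) :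
    (∃ t : ℚ, Real.log |(Q : ℝ)| /
        Real.log (((P : ℝ) + Real.sqrt ((P : ℝ) ^ 2 - 4 * (Q : ℝ))) / 2) = (t : ℝ))
      ↔ (Q = 1 ∨ Q = -1) := by
  have hD0 : (0:ℝ) < (P:ℝ)^2 - 4*Q := by
    by_contra h
    push_neg at h
    have h0 : Real.sqrt ((P:ℝ)^2 - 4*Q) = 0 := Real.sqrt_eq_zero_of_nonpos h
    rw [h0] at hirr
    exact hirr ⟨0, by norm_num⟩
  have hDQ : (0:ℚ) < P^2 - 4*Q := by
    have : ((0:ℚ):ℝ) < ((P^2 - 4*Q : ℚ) : ℝ) := by push_cast; linarith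
    exact_mod_cast this
  have hQlt : Q < P - 1 := by
    rcases le_or_gt P 2 with h | h
    · exact hPQ1 h
    · rcases lt_or_eq_of_le (hPQ2 h) with h2 | h2
      · exact h2
      · exfalso
        apply hirr
        refine ⟨P - 2, ?_⟩
        have hPR : (2:ℝ) < (P:ℝ) := by exact_mod_cast h
        have hQR : (Q:ℝ) = (P:ℝ) - 1 := by exact_mod_cast congrArg (Rat.cast : ℚ → ℝ) h2
        have he : (P:ℝ)^2 - 4*Q = ((P:ℝ)-2)^2 := by rw [hQR]; ring
        rw [he, Real.sqrt_sq (by linarith)]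
        push_cast
        ring
  have hsd : (2:ℝ) - (P:ℝ) < Real.sqrt ((P:ℝ)^2 - 4*Q) := by
    rcases le_or_gt ((2:ℝ) - P) 0 with h | h
    · exact h.trans_lt (Real.sqrt_pos.mpr hD0)
    · rw [show ((2:ℝ) - P) = Real.sqrt (((2:ℝ)-P)^2) from (Real.sqrt_sq h.le).symm]
      apply Real.sqrt_lt_sqrt (by positivity)
      have : (Q:ℝ) < (P:ℝ) - 1 := by exact_mod_cast hQlt
      nlinarith
  set s := Real.sqrt ((P:ℝ)^2 - 4*Q) with hs_def
  set a := ((P:ℝ) + s)/2 with ha_def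
  have ha1 : 1 < a := by
    rw [ha_def, lt_div_iff₀ (by norm_num : (0:ℝ) < 2)]
    linarith
  have ha0 : (0:ℝ) < a := by linarith
  have hla : 0 < Real.log a := Real.log_pos ha1
  have hQR0 : (Q:ℝ) ≠ 0 := by exact_mod_cast hQ
  have hQabs : (0:ℝ) < |(Q:ℝ)| := abs_pos.mpr hQR0
  constructor
  · rintro ⟨t, ht⟩
    rw [div_eq_iff hla.ne'] at ht
    by_cases ht0 : t = 0
    · subst ht0
      simp only [Rat.cast_zero, zero_mul] at ht
      rcases Real.log_eq_zero.mp ht with h | h | h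
      · exact absurd h hQabs.ne'
      · have : |Q| = 1 := by exact_mod_cast (by push_cast; exact h : ((|Q|:ℚ):ℝ) = ((1:ℚ):ℝ))
        rcases (abs_eq (by norm_num : (0:ℚ) ≤ 1)).mp this with h' | h'
        · exact Or.inl h'
        · exact Or.inr h'
      · linarith [abs_nonneg (Q:ℝ)]
    · -- t ≠ 0; derive a ^ t.num = |Q| ^ t.den, a rational number, contradiction
      exfalso
      have hQa : |(Q:ℝ)| = a ^ (t:ℝ) := by
        rw [Real.rpow_def_of_pos ha0, mul_comm, ← ht, Real.exp_log hQabs]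
      have htden : ((t:ℝ)) * (t.den:ℝ) = ((t.num:ℤ):ℝ) := by
        have hden : ((t.den:ℚ)) ≠ 0 := by exact_mod_cast t.den_ne_zero
        have h3 : (t:ℚ) * (t.den:ℚ) = (t.num:ℚ) := by
          nth_rewrite 1 [← Rat.num_div_den t]
          field_simp
        exact_mod_cast congrArg (Rat.cast : ℚ → ℝ) h3
      have key : a ^ t.num = |(Q:ℝ)| ^ t.den := by
        rw [hQa, ← Real.rpow_natCast (a ^ (t:ℝ)) t.den, ← Real.rpow_mul ha0.le, htden,
          Real.rpow_intCast]
      -- so a ^ t.num is rational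
      have habsQ : |(Q:ℝ)| = ((|Q| : ℚ) : ℝ) := by push_cast; ring
      have hnum0 : t.num ≠ 0 := Rat.num_ne_zero.mpr ht0
      have hrat : ∃ r : ℚ, a ^ (t.num.natAbs) = (r:ℝ) := by
        rcases lt_or_gt_of_ne hnum0 with hneg | hpos
        · refine ⟨(|Q| ^ t.den)⁻¹, ?_⟩
          have h1 : a ^ t.num = (a ^ (t.num.natAbs : ℕ))⁻¹ := by
            rw [← zpow_natCast a t.num.natAbs, ← zpow_neg]
            congr 1
            omega
          rw [h1, inv_eq_iff_eq_inv] at key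
          rw [key, habsQ]
          push_cast
          ring
        · refine ⟨|Q| ^ t.den, ?_⟩
          have h1 : a ^ t.num = a ^ (t.num.natAbs : ℕ) := by
            rw [← zpow_natCast a t.num.natAbs]
            congr 1
            omega
          rw [← h1, key, habsQ]
          push_cast
          ring
      obtain ⟨r, hr⟩ := hrat
      have hn1 : 1 ≤ t.num.natAbs := by omega
      obtain ⟨m, hm⟩ := Nat.exists_eq_add_of_le hn1
      obtain ⟨x, y, hx, hy, hxy⟩ := aux_pow14 P (P^2 - 4*Q) hP hDQ m
      rw [show ((P^2 - 4*Q : ℚ):ℝ) = (P:ℝ)^2 - 4*(Q:ℝ) from by push_cast; ring] at hxy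
      rw [← hs_def, ← ha_def] at hxy
      rw [hm, Nat.add_comm 1 m] at hr
      rw [hxy] at hr
      apply hirr
      refine ⟨(r - x)/y, ?_⟩
      have hy0 : (y:ℝ) ≠ 0 := by exact_mod_cast hy.ne'
      have : s = ((r:ℝ) - x)/y := by
        rw [eq_div_iff hy0]
        linear_combination hr
      rw [this]
      push_cast
      ring
  · rintro (rfl | rfl) <;>
    · refine ⟨0, ?_⟩
      norm_num
end

section
/- Let P, Q ∈ ℚ with √D irrational, and let m₁,…,m_d, r₁,…,r_d be positive integers and q ≥ 2 an integer. If the value ζ_U^d(-m₁,…,-m_d | r₁,…,r_d) is defined (i.e., (-m₁,…,-m_d) is not a singularity of the meromorphic continuation), then it is a rational number. -/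
namespace Stmt16Aux

/-- `x` and `y` are a conjugate pair over `ℚ(s)`. -/
def CP (s x y : ℝ) : Prop := ∃ a b : ℚ, x = (a : ℝ) + b * s ∧ y = (a : ℝ) - b * s

variable {s : ℝ} {D : ℚ}

lemma cp_rat (s : ℝ) (c : ℚ) : CP s c c := ⟨c, 0, by simp, by simp⟩

lemma cp_add {x y x' y' : ℝ} (h : CP s x y) (h' : CP s x' y') :
    CP s (x + x') (y + y') := by
  obtain ⟨a, b, hx, hy⟩ := h; obtain ⟨a', b', hx', hy'⟩ := h'
  exact ⟨a + a', b + b', by rw [hx, hx']; push_cast; ring,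
    by rw [hy, hy']; push_cast; ring⟩

lemma cp_neg {x y : ℝ} (h : CP s x y) : CP s (-x) (-y) := by
  obtain ⟨a, b, hx, hy⟩ := h
  exact ⟨-a, -b, by rw [hx]; push_cast; ring, by rw [hy]; push_cast; ring⟩

lemma cp_sub {x y x' y' : ℝ} (h : CP s x y) (h' : CP s x' y') :
    CP s (x - x') (y - y') := by
  simpa [sub_eq_add_neg] using cp_add h (cp_neg h')

lemma cp_mul (hs2 : s ^ 2 = (D : ℝ)) {x y x' y' : ℝ} (h : CP s x y) (h' : CP s x' y') :
    CP s (x * x') (y * y') := by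
  obtain ⟨a, b, hx, hy⟩ := h; obtain ⟨a', b', hx', hy'⟩ := h'
  refine ⟨a * a' + D * (b * b'), a * b' + b * a', ?_, ?_⟩
  · rw [hx, hx']; push_cast; linear_combination ((b : ℝ) * b') * hs2
  · rw [hy, hy']; push_cast; linear_combination ((b : ℝ) * b') * hs2

lemma rep_zero (hs : Irrational s) {a b : ℚ} (h : (a : ℝ) + b * s = 0) :
    a = 0 ∧ b = 0 := by
  by_cases hb : b = 0
  · refine ⟨?_, hb⟩
    rw [hb] at h; push_cast at h; simp at h; exact_mod_cast h
  · exfalso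
    have hs' : s = ((-a / b : ℚ) : ℝ) := by
      push_cast
      have : (b : ℝ) ≠ 0 := by exact_mod_cast hb
      field_simp
      linarith [h]
    exact hs ⟨-a / b, hs'.symm⟩

lemma cp_inv (hs : Irrational s) (hs2 : s ^ 2 = (D : ℝ)) {x y : ℝ} (h : CP s x y) :
    CP s x⁻¹ y⁻¹ := by
  obtain ⟨a, b, hx, hy⟩ := h
  by_cases hx0 : x = 0
  · have h0 := rep_zero hs (hx ▸ hx0 ▸ rfl : (a : ℝ) + b * s = 0)
    have hy0 : y = 0 := by rw [hy, h0.1, h0.2]; simp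
    rw [hx0, hy0]; simpa using cp_rat s 0
  · have hden : a ^ 2 - D * b ^ 2 ≠ 0 := by
      intro hd
      by_cases hb : b = 0
      · apply hx0
        rw [hx, hb]
        have : a = 0 := by
          have : a ^ 2 = 0 := by rw [← hd, hb]; ring
          exact pow_eq_zero_iff (by norm_num) |>.mp this
        rw [this]; simp
      · have hb' : (b : ℝ) ≠ 0 := by exact_mod_cast hb
        have hd' : (a : ℝ) ^ 2 - D * b ^ 2 = 0 := by exact_mod_cast congrArg (Rat.cast : ℚ → ℝ) hd
        have h2 : (((a / b : ℚ) : ℝ) - s) * (((a / b : ℚ) : ℝ) + s) = 0 := by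
          push_cast
          field_simp
          linear_combination hd' - (b:ℝ)^2 * hs2
        rcases mul_eq_zero.mp h2 with h3 | h3
        · exact hs ⟨a / b, by linarith [h3]⟩
        · exact hs ⟨-(a / b), by push_cast at h3 ⊢; linarith [h3]⟩
    have hdenR : ((a ^ 2 - D * b ^ 2 : ℚ) : ℝ) ≠ 0 := by exact_mod_cast hden
    refine ⟨a / (a ^ 2 - D * b ^ 2), -b / (a ^ 2 - D * b ^ 2), ?_, ?_⟩
    · have key : x * (((a / (a ^ 2 - D * b ^ 2) : ℚ) : ℝ) +
          ((-b / (a ^ 2 - D * b ^ 2) : ℚ) : ℝ) * s) = 1 := by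
        rw [hx]; push_cast at hdenR ⊢
        have h2 : ((a:ℝ) + ↑b * s) * (↑a / (↑a^2 - ↑D*↑b^2) + -↑b/((a:ℝ)^2-↑D*↑b^2) * s)
            = (((a:ℝ) + ↑b*s) * (↑a - ↑b*s)) / ((a:ℝ)^2 - ↑D*↑b^2) := by ring
        rw [h2, div_eq_one_iff_eq hdenR]
        linear_combination (-((b:ℝ)^2)) * hs2
      rw [inv_eq_of_mul_eq_one_right key]
    · have key : y * (((a / (a ^ 2 - D * b ^ 2) : ℚ) : ℝ) -
          ((-b / (a ^ 2 - D * b ^ 2) : ℚ) : ℝ) * s) = 1 := by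
        rw [hy]; push_cast at hdenR ⊢
        have h2 : ((a:ℝ) - ↑b * s) * (↑a / (↑a^2 - ↑D*↑b^2) - -↑b/((a:ℝ)^2-↑D*↑b^2) * s)
            = (((a:ℝ) - ↑b*s) * (↑a + ↑b*s)) / ((a:ℝ)^2 - ↑D*↑b^2) := by ring
        rw [h2, div_eq_one_iff_eq hdenR]
        linear_combination (-((b:ℝ)^2)) * hs2
      rw [inv_eq_of_mul_eq_one_right key]

lemma cp_div (hs : Irrational s) (hs2 : s ^ 2 = (D : ℝ)) {x y x' y' : ℝ}
    (h : CP s x y) (h' : CP s x' y') : CP s (x / x') (y / y') := by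
  simpa [div_eq_mul_inv] using cp_mul hs2 h (cp_inv hs hs2 h')

lemma cp_pow (hs2 : s ^ 2 = (D : ℝ)) {x y : ℝ} (h : CP s x y) (n : ℕ) :
    CP s (x ^ n) (y ^ n) := by
  induction n with
  | zero => simpa using cp_rat s 1
  | succ n ih => rw [pow_succ, pow_succ]; exact cp_mul hs2 ih h

lemma cp_zpow (hs : Irrational s) (hs2 : s ^ 2 = (D : ℝ)) {x y : ℝ} (h : CP s x y) (n : ℤ) :
    CP s (x ^ n) (y ^ n) := by
  cases n with
  | ofNat n => simpa using cp_pow hs2 h n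
  | negSucc n =>
    rw [zpow_negSucc, zpow_negSucc]
    exact cp_inv hs hs2 (cp_pow hs2 h (n + 1))

lemma cp_sum (hs2 : s ^ 2 = (D : ℝ)) {ι : Type*} (t : Finset ι) (f g : ι → ℝ)
    (h : ∀ i ∈ t, CP s (f i) (g i)) :
    CP s (∑ i ∈ t, f i) (∑ i ∈ t, g i) := by
  classical
  induction t using Finset.induction with
  | empty => simpa using cp_rat s 0
  | insert _ _ hni ih =>
    rw [Finset.sum_insert hni, Finset.sum_insert hni]
    exact cp_add (h _ (Finset.mem_insert_self _ _))
      (ih fun i hi => h i (Finset.mem_insert_of_mem hi))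

lemma cp_prod (hs2 : s ^ 2 = (D : ℝ)) {ι : Type*} (t : Finset ι) (f g : ι → ℝ)
    (h : ∀ i ∈ t, CP s (f i) (g i)) :
    CP s (∏ i ∈ t, f i) (∏ i ∈ t, g i) := by
  classical
  induction t using Finset.induction with
  | empty => simpa using cp_rat s 1
  | insert _ _ hni ih =>
    rw [Finset.prod_insert hni, Finset.prod_insert hni]
    exact cp_mul hs2 (h _ (Finset.mem_insert_self _ _))
      (ih fun i hi => h i (Finset.mem_insert_of_mem hi))

end Stmt16Aux

namespace Stmt16Aux

/-- The factor of the finite binomial expansion. -/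
noncomputable def Fterm (Q : ℚ) {d : ℕ} (q : ℕ) (m r : Fin d → ℕ) (x : ℝ) (k : Fin d → ℕ)
    (j : Fin d) : ℝ :=
  ((m j).choose (k j) : ℝ) * (-1) ^ (k j) *
    ((Q : ℝ) ^ ((∑ i ∈ Finset.Ici j, k i) * r j) *
      x ^ (-(r j : ℤ) * (-(∑ i ∈ Finset.Ici j, (m i : ℤ)) +
        2 * ∑ i ∈ Finset.Ici j, (k i : ℤ)))) /
    (1 - (Q : ℝ) ^ (q * ∑ i ∈ Finset.Ici j, k i) *
      x ^ (-(q : ℤ) * (-(∑ i ∈ Finset.Ici j, (m i : ℤ)) +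
        2 * ∑ i ∈ Finset.Ici j, (k i : ℤ))))

lemma cp_one {s : ℝ} : CP s 1 1 := ⟨1, 0, by simp, by simp⟩

lemma cp_natCast {s : ℝ} (n : ℕ) : CP s (n : ℝ) (n : ℝ) :=
  ⟨(n : ℚ), 0, by push_cast; ring, by push_cast; ring⟩

lemma cp_neg_one {s : ℝ} : CP s (-1) (-1) := ⟨-1, 0, by push_cast; ring, by push_cast; ring⟩

lemma cp_Fterm {s : ℝ} {D : ℚ} (hs : Irrational s) (hs2 : s ^ 2 = (D : ℝ))
    {α β : ℝ} (hαβ : CP s α β) (Q : ℚ) {d : ℕ} (q : ℕ) (m r : Fin d → ℕ)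
    (k : Fin d → ℕ) (j : Fin d) :
    CP s (Fterm Q q m r α k j) (Fterm Q q m r β k j) := by
  unfold Fterm
  refine cp_div hs hs2 (cp_mul hs2 (cp_mul hs2 (cp_natCast _) (cp_pow hs2 cp_neg_one _))
    (cp_mul hs2 (cp_pow hs2 (cp_rat s Q) _) (cp_zpow hs hs2 hαβ _)))
    (cp_sub cp_one (cp_mul hs2 (cp_pow hs2 (cp_rat s Q) _) (cp_zpow hs hs2 hαβ _)))

/-- Key exponent-shifting identity: replacing `β` by its conjugate expression. -/
lemma key_num (Q : ℚ) (hQ : (Q : ℝ) ≠ 0) (α β : ℝ) (hα0 : α ≠ 0)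
    (hαβ : α * β = (Q : ℝ)) (R M K : ℕ) (hKM : K ≤ M) :
    (Q : ℝ) ^ (K * R) * β ^ (-(R : ℤ) * (-(M : ℤ) + 2 * (K : ℤ)))
      = (Q : ℝ) ^ ((M - K) * R) *
        α ^ (-(R : ℤ) * (-(M : ℤ) + 2 * ((M - K : ℕ) : ℤ))) := by
  have hβ : β = (Q : ℝ) * α⁻¹ := by
    field_simp
    linarith [hαβ]
  have hc : ((M - K : ℕ) : ℤ) = (M : ℤ) - K := by omega
  rw [hβ, mul_zpow, ← zpow_natCast (Q : ℝ) (K * R), ← mul_assoc, ← zpow_add₀ hQ,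
    ← zpow_natCast (Q : ℝ) ((M - K) * R), inv_zpow, ← zpow_neg]
  congr 1
  · congr 1
    push_cast [hc]
    ring
  · congr 1
    rw [hc]
    ring

lemma flip (Q : ℚ) (hQ : (Q : ℝ) ≠ 0) {d : ℕ} (q : ℕ) (m r : Fin d → ℕ)
    (α β : ℝ) (hα0 : α ≠ 0) (hαβ : α * β = (Q : ℝ))
    (k : Fin d → ℕ) (hk : ∀ i, k i ≤ m i) (j : Fin d) :
    Fterm Q q m r β k j
      = (-1 : ℝ) ^ (m j) * Fterm Q q m r α (fun i => m i - k i) j := by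
  have hKM : ∑ i ∈ Finset.Ici j, k i ≤ ∑ i ∈ Finset.Ici j, m i :=
    Finset.sum_le_sum fun i _ => hk i
  have hsumZ : ∀ f : Fin d → ℕ, ∑ i ∈ Finset.Ici j, (f i : ℤ)
      = ((∑ i ∈ Finset.Ici j, f i : ℕ) : ℤ) := fun f => by push_cast; ring
  have hsub : ∑ i ∈ Finset.Ici j, (m i - k i)
      = ∑ i ∈ Finset.Ici j, m i - ∑ i ∈ Finset.Ici j, k i := by
    have h1 : (∑ i ∈ Finset.Ici j, (m i - k i)) + ∑ i ∈ Finset.Ici j, k i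
        = ∑ i ∈ Finset.Ici j, m i := by
      rw [← Finset.sum_add_distrib]
      exact Finset.sum_congr rfl fun i _ => Nat.sub_add_cancel (hk i)
    omega
  unfold Fterm
  rw [hsumZ m, hsumZ k, hsumZ (fun i => m i - k i), hsub]
  rw [key_num Q hQ α β hα0 hαβ (r j) _ _ hKM]
  have hden := key_num Q hQ α β hα0 hαβ q _ _ hKM
  rw [mul_comm q (∑ i ∈ Finset.Ici j, k i),
    mul_comm q (∑ i ∈ Finset.Ici j, m i - ∑ i ∈ Finset.Ici j, k i)] at *
  rw [hden]
  have hchoose : (m j).choose (m j - k j) = (m j).choose (k j) :=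
    Nat.choose_symm (hk j)
  have hsign : ((-1 : ℝ)) ^ (k j) = (-1) ^ (m j) * (-1) ^ (m j - k j) := by
    have h1 : m j = (m j - k j) + k j := (Nat.sub_add_cancel (hk j)).symm
    have h2 : ((-1 : ℝ)) ^ ((m j - k j) + (m j - k j)) = 1 :=
      Even.neg_one_pow ⟨m j - k j, rfl⟩
    calc ((-1 : ℝ)) ^ (k j) = (-1) ^ ((m j - k j) + (m j - k j)) * (-1) ^ (k j) := by
          rw [h2, one_mul]
      _ = (-1) ^ ((m j - k j) + k j) * (-1) ^ (m j - k j) := by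
          rw [pow_add, pow_add]; ring
      _ = (-1) ^ (m j) * (-1) ^ (m j - k j) := by rw [← h1]
  rw [hchoose, hsign]
  ring

end Stmt16Aux


open Stmt16Aux in
/-- For rational `P, Q` satisfying the standing hypotheses with `√D`
irrational, the value of the meromorphically continued multiple shifted Lucas zeta
function at negative integer arguments `(-m₁,…,-m_d)`, given by the (now finite)
binomial expansion, is rational whenever it is defined (i.e. no denominator vanishes).
Here `M_j = m_j+⋯+m_d` and `K_j = k_j+⋯+k_d`. -/
theorem stmt16 (P Q : ℚ) (hP : 0 < P) (hQ : Q ≠ 0)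
    (hPQ1 : P ≤ 2 → Q < P - 1) (hPQ2 : 2 < P → Q ≤ P - 1)
    (hirr : Irrational (Real.sqrt ((P : ℝ) ^ 2 - 4 * (Q : ℝ))))
    (α : ℝ) (hα : α = ((P : ℝ) + Real.sqrt ((P : ℝ) ^ 2 - 4 * (Q : ℝ))) / 2)
    (d q : ℕ) (hd : 1 ≤ d) (hq : 2 ≤ q)
    (m r : Fin d → ℕ) (hm : ∀ j, 1 ≤ m j) (hr : ∀ j, 1 ≤ r j)
    (hreg : ∀ (k : Fin d → ℕ) (j : Fin d),
      (1 : ℝ) - (Q : ℝ) ^ (q * ∑ i ∈ Finset.Ici j, k i) *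
          α ^ (-(q : ℤ) * (-(∑ i ∈ Finset.Ici j, (m i : ℤ)) +
            2 * ∑ i ∈ Finset.Ici j, (k i : ℤ))) ≠ 0) :
    ∃ t : ℚ,
      Real.rpow ((P : ℝ) ^ 2 - 4 * (Q : ℝ)) ((-(∑ j : Fin d, (m j : ℝ))) / 2) *
        ∑' k : Fin d → ℕ,
          ∏ j : Fin d,
            ((m j).choose (k j) : ℝ) * (-1) ^ (k j) *
              ((Q : ℝ) ^ ((∑ i ∈ Finset.Ici j, k i) * r j) *
                α ^ (-(r j : ℤ) * (-(∑ i ∈ Finset.Ici j, (m i : ℤ)) +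
                  2 * ∑ i ∈ Finset.Ici j, (k i : ℤ)))) /
              (1 - (Q : ℝ) ^ (q * ∑ i ∈ Finset.Ici j, k i) *
                α ^ (-(q : ℤ) * (-(∑ i ∈ Finset.Ici j, (m i : ℤ)) +
                  2 * ∑ i ∈ Finset.Ici j, (k i : ℤ))))
        = (t : ℝ) := by
  classical
  set s : ℝ := Real.sqrt ((P : ℝ) ^ 2 - 4 * (Q : ℝ)) with hsdef
  have hQ' : (Q : ℝ) ≠ 0 := Rat.cast_ne_zero.mpr hQ
  have hsne : s ≠ 0 := fun h => hirr ⟨0, by rw [h]; simp⟩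
  have hD'pos : (0 : ℝ) < (P : ℝ) ^ 2 - 4 * Q := Real.sqrt_ne_zero'.mp hsne
  set Dq : ℚ := P ^ 2 - 4 * Q with hDqdef
  have hDcast : ((Dq : ℚ) : ℝ) = (P : ℝ) ^ 2 - 4 * Q := by rw [hDqdef]; push_cast; ring
  have hs2' : s ^ 2 = (P : ℝ) ^ 2 - 4 * Q := Real.sq_sqrt hD'pos.le
  have hs2 : s ^ 2 = (Dq : ℝ) := by rw [hDcast]; exact hs2'
  have hDq0 : (Dq : ℚ) ≠ 0 := by
    intro h
    rw [h] at hDcast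
    simp at hDcast
    linarith
  set β : ℝ := ((P : ℝ) - s) / 2 with hβdef
  have hαβ : α * β = (Q : ℝ) := by
    rw [hα, hβdef]
    linear_combination (-(1 : ℝ) / 4) * hs2'
  have hα0 : α ≠ 0 := fun h => hQ' (by rw [← hαβ, h, zero_mul])
  have hCP : CP s α β := ⟨P / 2, 1 / 2, by rw [hα]; push_cast; ring,
    by rw [hβdef]; push_cast; ring⟩
  set M : ℕ := ∑ j : Fin d, m j with hMdef
  set B : Finset (Fin d → ℕ) := Fintype.piFinset fun j => Finset.range (m j + 1) with hBdef
  -- the tsum is a finite sum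
  have hvanish : ∀ k ∉ B, (∏ j : Fin d, Fterm Q q m r α k j) = 0 := by
    intro k hk
    rw [hBdef, Fintype.mem_piFinset] at hk
    push_neg at hk
    obtain ⟨j, hj⟩ := hk
    rw [Finset.mem_range, not_lt] at hj
    refine Finset.prod_eq_zero (Finset.mem_univ j) ?_
    unfold Fterm
    rw [Nat.choose_eq_zero_of_lt (by omega)]
    simp
  -- prefactor as a zpow of s
  have hpref : Real.rpow ((P : ℝ) ^ 2 - 4 * (Q : ℝ)) ((-(∑ j : Fin d, (m j : ℝ))) / 2)
      = s ^ (-(M : ℤ)) := by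
    have h1 : (-(∑ j : Fin d, (m j : ℝ))) / 2 = (1 / 2 : ℝ) * ((-(M : ℤ) : ℤ) : ℝ) := by
      rw [hMdef]; push_cast; ring
    show ((P : ℝ) ^ 2 - 4 * (Q : ℝ)) ^ ((-(∑ j : Fin d, (m j : ℝ))) / 2) = _
    rw [h1, Real.rpow_mul hD'pos.le, Real.rpow_intCast, ← Real.sqrt_eq_rpow, ← hsdef]
  -- main conjugation setup
  set X : ℝ := ∑ k ∈ B, ∏ j : Fin d, Fterm Q q m r α k j with hXdef
  set Y : ℝ := ∑ k ∈ B, ∏ j : Fin d, Fterm Q q m r β k j with hYdef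
  have hXY : CP s X Y :=
    cp_sum hs2 _ _ _ fun k _ => cp_prod hs2 _ _ _ fun j _ =>
      cp_Fterm hirr hs2 hCP Q q m r k j
  have hflipsum : Y = (-1 : ℝ) ^ M * X := by
    rw [hYdef, hXdef, Finset.mul_sum]
    refine Finset.sum_nbij' (fun k => fun i => m i - k i) (fun k => fun i => m i - k i)
      ?_ ?_ ?_ ?_ ?_
    · intro k hk
      simp only [hBdef, Fintype.mem_piFinset, Finset.mem_range] at hk ⊢
      intro i
      have := hk i
      omega
    · intro k hk
      simp only [hBdef, Fintype.mem_piFinset, Finset.mem_range] at hk ⊢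
      intro i
      have := hk i
      omega
    · intro k hk
      simp only [hBdef, Fintype.mem_piFinset, Finset.mem_range] at hk
      funext i
      have := hk i
      simp only []
      omega
    · intro k hk
      simp only [hBdef, Fintype.mem_piFinset, Finset.mem_range] at hk
      funext i
      have := hk i
      simp only []
      omega
    · intro k hk
      simp only [hBdef, Fintype.mem_piFinset, Finset.mem_range] at hk
      have hki : ∀ i, k i ≤ m i := by
        intro i
        have := hk i
        omega
      calc ∏ j : Fin d, Fterm Q q m r β k j
          = ∏ j : Fin d, ((-1 : ℝ) ^ (m j) * Fterm Q q m r α (fun i => m i - k i) j) :=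
            Finset.prod_congr rfl fun j _ => flip Q hQ' q m r α β hα0 hαβ k hki j
        _ = (-1 : ℝ) ^ M * ∏ j : Fin d, Fterm Q q m r α (fun i => m i - k i) j := by
            rw [Finset.prod_mul_distrib, Finset.prod_pow_eq_pow_sum, hMdef]
  obtain ⟨a, b, hXa, hYb⟩ := hXY
  suffices h : ∃ t : ℚ, s ^ (-(M : ℤ)) * X = (t : ℝ) by
    obtain ⟨t, ht⟩ := h
    refine ⟨t, ?_⟩
    rw [hpref]
    show s ^ (-(M : ℤ)) * ∑' k : Fin d → ℕ, ∏ j : Fin d, Fterm Q q m r α k j = (t : ℝ)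
    rw [tsum_eq_sum hvanish, ← hXdef]
    exact ht
  rcases Nat.even_or_odd M with ⟨n, hn⟩ | ⟨n, hn⟩
  · -- even case: Y = X, so b = 0
    have hsign : ((-1 : ℝ)) ^ M = 1 := Even.neg_one_pow ⟨n, hn⟩
    rw [hsign, one_mul] at hflipsum
    have hb : (b : ℝ) = 0 := by
      have h1 : (b : ℝ) * s = -((b : ℝ) * s) := by
        rw [hXa, hYb] at hflipsum
        linarith
      rcases mul_eq_zero.mp (show (b : ℝ) * s = 0 by linarith) with h | h
      · exact h
      · exact absurd h hsne
    refine ⟨Dq ^ (-(n : ℤ)) * a, ?_⟩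
    have hX : X = (a : ℝ) := by rw [hXa, hb]; ring
    have hzs : s ^ (-(M : ℤ)) = (Dq : ℝ) ^ (-(n : ℤ)) := by
      rw [← hs2, ← zpow_natCast s 2, ← zpow_mul]
      congr 1
      omega
    rw [hX, hzs]
    push_cast
    ring
  · -- odd case: Y = -X, so a = 0
    have hsign : ((-1 : ℝ)) ^ M = -1 := Odd.neg_one_pow ⟨n, hn⟩
    rw [hsign] at hflipsum
    have ha : (a : ℝ) = 0 := by
      rw [hXa, hYb] at hflipsum
      linarith
    refine ⟨Dq ^ (-(n : ℤ)) * b, ?_⟩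
    have hX : X = (b : ℝ) * s := by rw [hXa, ha]; ring
    have hzs : s ^ (-(M : ℤ)) * s = (Dq : ℝ) ^ (-(n : ℤ)) := by
      rw [(zpow_add_one₀ hsne (-(M : ℤ))).symm, ← hs2, ← zpow_natCast s 2, ← zpow_mul]
      congr 1
      omega
    rw [hX, ← mul_assoc, mul_comm (s ^ (-(M : ℤ))) ((b : ℝ)), mul_assoc, hzs]
    push_cast
    ring
end

section
/- Let P ∈ ℚ and Q = 1 satisfy the standing hypotheses with √D irrational. Then the point (s₁,…,s_d) = (-m₁,…,-m_d) with m_j positive integers avoids all singular hyperplanes of the continued multiple shifted Lucas zeta function ζ_U^d(s|r) if and only if m_j + m_{j+1} + ⋯ + m_d is odd for every 1 ≤ j ≤ d. -/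
/-- For `Q = 1` (so the standing hypotheses force `P > 2`) with `√D`
irrational, `D = P² - 4`, the real point `(-m₁,…,-m_d)` avoids all singular hyperplanes
`s_j+⋯+s_d = -2(k_j+⋯+k_d) + (2n/q)·(πi/log α)` of the continued multiple shifted
Lucas zeta function iff every tail sum `m_j + m_{j+1} + ⋯ + m_d` is odd. -/
theorem stmt17 (P : ℚ) (hP : 0 < P)
    (hPQ1 : P ≤ 2 → (1 : ℚ) < P - 1) (hPQ2 : 2 < P → (1 : ℚ) ≤ P - 1)
    (hirr : Irrational (Real.sqrt ((P : ℝ) ^ 2 - 4)))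
    (α : ℝ) (hα : α = ((P : ℝ) + Real.sqrt ((P : ℝ) ^ 2 - 4)) / 2)
    (d q : ℕ) (hd : 1 ≤ d) (hq : 2 ≤ q)
    (m : Fin d → ℕ) (hm : ∀ j, 1 ≤ m j) :
    (∀ (j : Fin d) (k : Fin d → ℕ) (n : ℤ),
        (-(∑ i ∈ Finset.Ici j, (m i : ℂ))) ≠
          -2 * (∑ i ∈ Finset.Ici j, (k i : ℂ)) +
            ((2 * (n : ℂ)) / (q : ℂ)) * ((Real.pi : ℂ) * Complex.I / (Real.log α : ℂ)))
      ↔ ∀ j : Fin d, Odd (∑ i ∈ Finset.Ici j, m i) := by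
  have hP2 : (2 : ℚ) < P := by
    by_contra h
    push_neg at h
    have := hPQ1 h
    linarith
  have hPr : (2 : ℝ) < (P : ℝ) := by exact_mod_cast hP2
  have hsq : 0 ≤ Real.sqrt ((P : ℝ) ^ 2 - 4) := Real.sqrt_nonneg _
  have hα1 : 1 < α := by rw [hα]; nlinarith
  have hL : Real.log α ≠ 0 := ne_of_gt (Real.log_pos hα1)
  have hq0 : (q : ℝ) ≠ 0 := by positivity
  constructor
  · intro h j
    by_contra hodd
    have heven : Even (∑ i ∈ Finset.Ici j, m i) := Nat.not_odd_iff_even.mp hodd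
    obtain ⟨t, ht⟩ := heven
    refine h j (fun i => if i = j then t else 0) 0 ?_
    have hk : ∑ i ∈ Finset.Ici j, ((if i = j then t else 0 : ℕ) : ℂ) = (t : ℂ) := by
      rw [show ∑ i ∈ Finset.Ici j, ((if i = j then t else 0 : ℕ) : ℂ)
            = ∑ i ∈ Finset.Ici j, (if i = j then (t : ℂ) else 0) by
          apply Finset.sum_congr rfl; intro i _; split <;> simp]
      rw [Finset.sum_ite_eq' (Finset.Ici j) j (fun _ => (t : ℂ))]
      simp
    have hM : ∑ i ∈ Finset.Ici j, ((m i : ℂ)) = ((t : ℂ) + t) := by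
      rw [← Nat.cast_sum, ht]; push_cast; ring
    rw [hk, hM]
    push_cast
    ring
  · intro h j k n heq
    have hodd := h j
    rw [← Nat.cast_sum, ← Nat.cast_sum] at heq
    set M := ∑ i ∈ Finset.Ici j, m i with hMdef
    set K := ∑ i ∈ Finset.Ici j, k i
    have him := congrArg Complex.im heq
    simp [Complex.add_im, Complex.mul_im, Complex.div_im, Complex.div_re,
      Complex.mul_re, Complex.normSq, Complex.ofReal_im, Complex.ofReal_re] at him
    have hn0 : n = 0 := by
      rcases him with (h1 | h1) | h1 | h1
      · exact h1
      · omega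
      · exact absurd h1 (ne_of_gt (by linarith))
      · rcases h1 with h | h | h <;> nlinarith [hα1]
    subst hn0
    simp at heq
    have hre := congrArg Complex.re heq
    simp [Complex.neg_re, Complex.mul_re] at hre
    have : (M : ℝ) = 2 * K := by linarith
    have hM2 : M = 2 * K := by exact_mod_cast this
    rw [hM2] at hodd
    exact (Nat.not_odd_iff_even.mpr ⟨K, by ring⟩) hodd
end
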